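/- arXiv:1807.11315 — 9 statements merged into one kernel-verified Lean document; each statement's English description precedes it below -/
import Mathlib

section
/- Under the stability bound (NE2), for every v ∈ V and every 1 ≤ p ≤ n+1, if I is a uniform random subset of size p of {0,1,…,n}, then E(‖Σ_{i∈I} ω_i R_i T_i v‖²) ≤ λ_max · (p/(n+1)) · a(Pv, v). -/
open scoped RealInnerProductSpace

/-!
Apply (NE2) to the family `T_i v` restricted to `I`, then average over `I`: every index lies in
a fraction `p / (n + 1)` of the `p`-subsets, so the average of `∑_{i ∈ I} ω_i ‖T_i v‖²` is
`p / (n + 1) · ∑_i ω_i ‖T_i v‖² = p / (n + 1) · a(Pv, v)`.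
-/

namespace Finset

theorem card_mul_card_filter_mem_powersetCard {α : Type*} [DecidableEq α]
    {s : Finset α} {a : α} (ha : a ∈ s) (p : ℕ) :
    #s * #{I ∈ s.powersetCard p | a ∈ I} = p * (#s).choose p := by
  obtain ⟨m, hm⟩ : ∃ m, #s = m + 1 := Nat.exists_eq_add_one.mpr (card_pos.mpr ⟨a, ha⟩)
  cases p with
  | zero => simp
  | succ k =>
    have hcount := card_filter_powersetCard_subset {a} s (k + 1)
      (singleton_subset_iff.mpr ha) (by simp)
    simp only [singleton_subset_iff, card_singleton, hm, add_tsub_cancel_right] at hcount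
    rw [hcount, hm, Nat.add_one_mul_choose_eq, mul_comm]

theorem card_smul_sum_powersetCard_sum {α M : Type*} [AddCommMonoid M]
    (s : Finset α) (p : ℕ) (f : α → M) :
    #s • ∑ I ∈ s.powersetCard p, ∑ i ∈ I, f i = (p * (#s).choose p) • ∑ i ∈ s, f i := by
  classical
  have hswap : ∑ I ∈ s.powersetCard p, ∑ i ∈ I, f i
      = ∑ i ∈ s, #{I ∈ s.powersetCard p | i ∈ I} • f i := by
    rw [sum_comm' (s' := fun i => {I ∈ s.powersetCard p | i ∈ I}) (t' := s)]
    · simp only [sum_const]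
    · intro I i
      simp only [mem_powersetCard, mem_filter]
      exact ⟨fun h => ⟨⟨h.1, h.2⟩, h.1.1 h.2⟩, fun h => ⟨h.1.1, h.1.2⟩⟩
  rw [hswap, smul_sum, smul_sum]
  refine sum_congr rfl fun i hi => ?_
  rw [smul_smul, card_mul_card_filter_mem_powersetCard hi]

end Finset

theorem norm_sq_sum_smul_le_of_forall_norm_sq_sum_smul_le
    {ι V : Type*} [Fintype ι] [DecidableEq ι] [SeminormedAddCommGroup V] [NormedSpace ℝ V]
    {W : ι → Type*} [∀ i, SeminormedAddCommGroup (W i)] [∀ i, NormedSpace ℝ (W i)]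
    (R : ∀ i, W i →L[ℝ] V) (ω : ι → ℝ) (lmax : ℝ)
    (hR : ∀ w : ∀ i, W i, ‖∑ i, ω i • R i (w i)‖ ^ 2 ≤ lmax * ∑ i, ω i * ‖w i‖ ^ 2)
    (w : ∀ i, W i) (I : Finset ι) :
    ‖∑ i ∈ I, ω i • R i (w i)‖ ^ 2 ≤ lmax * ∑ i ∈ I, ω i * ‖w i‖ ^ 2 := by
  simpa [apply_ite, Finset.sum_ite_mem] using hR fun i => if i ∈ I then w i else 0

theorem ContinuousLinearMap.inner_apply_adjoint_apply_self
    {V W : Type*} [NormedAddCommGroup V] [InnerProductSpace ℝ V] [CompleteSpace V]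
    [NormedAddCommGroup W] [InnerProductSpace ℝ W] [CompleteSpace W] (R : W →L[ℝ] V) (v : V) :
    ⟪R (adjoint R v), v⟫ = ‖adjoint R v‖ ^ 2 := by
  rw [← adjoint_inner_right, real_inner_self_eq_norm_sq]

theorem expectation_norm_sq_randomized_additive_schwarz_general
    {V : Type*} [NormedAddCommGroup V] [InnerProductSpace ℝ V] [CompleteSpace V]
    {n : ℕ} {W : Fin (n + 1) → Type*}
    [∀ i, NormedAddCommGroup (W i)] [∀ i, InnerProductSpace ℝ (W i)]
    [∀ i, CompleteSpace (W i)]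
    (R : ∀ i, W i →L[ℝ] V) (ω : Fin (n + 1) → ℝ)
    (lmax : ℝ)
    (hNE2 : ∀ w : ∀ i, W i,
      ‖∑ i, ω i • R i (w i)‖ ^ 2 ≤ lmax * ∑ i, ω i * ‖w i‖ ^ 2)
    (p : ℕ) (v : V) :
    (((n + 1).choose p : ℝ))⁻¹ *
        ∑ I ∈ Finset.powersetCard p (Finset.univ : Finset (Fin (n + 1))),
          ‖∑ i ∈ I, ω i • R i ((ContinuousLinearMap.adjoint (R i)) v)‖ ^ 2 ≤
      lmax * ((p : ℝ) / (n + 1)) *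
        ⟪(∑ i, ω i • R i ((ContinuousLinearMap.adjoint (R i)) v)), v⟫ := by
  set T : ∀ i, W i := fun i => ContinuousLinearMap.adjoint (R i) v
  set S := ∑ i, ω i * ‖T i‖ ^ 2
  set N := (((n + 1).choose p : ℕ) : ℝ)
  have hinner : ⟪∑ i, ω i • R i (T i), v⟫ = S := by
    simp only [sum_inner, real_inner_smul_left,
      ContinuousLinearMap.inner_apply_adjoint_apply_self, T, S]
  have hcount : (n + 1 : ℝ) * ∑ I ∈ Finset.powersetCard p Finset.univ, ∑ i ∈ I, ω i * ‖T i‖ ^ 2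
      = p * N * S := by
    simpa using Finset.card_smul_sum_powersetCard_sum Finset.univ p fun i => ω i * ‖T i‖ ^ 2
  -- Needed for `p > n + 1`, where `N⁻¹ * N = 0`.
  have hS : 0 ≤ lmax * S := (sq_nonneg _).trans (hNE2 T)
  rw [hinner]
  calc N⁻¹ * ∑ I ∈ Finset.powersetCard p Finset.univ, ‖∑ i ∈ I, ω i • R i (T i)‖ ^ 2
      ≤ N⁻¹ * ∑ I ∈ Finset.powersetCard p Finset.univ, lmax * ∑ i ∈ I, ω i * ‖T i‖ ^ 2 := by
        gcongr with I
        exact norm_sq_sum_smul_le_of_forall_norm_sq_sum_smul_le R ω lmax hNE2 T I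
    _ = (N⁻¹ * N) * (p / (n + 1) * (lmax * S)) := by
        rw [← Finset.mul_sum]
        field_simp
        linear_combination lmax * N⁻¹ * hcount
    _ ≤ lmax * (p / (n + 1)) * S := by
        rw [mul_assoc lmax, mul_left_comm lmax]
        exact mul_le_of_le_one_left (by positivity) inv_mul_le_one

/-- Under the stability bound (NE2), for every `v ∈ V` and `1 ≤ p ≤ n+1`,
if `I` is a uniform random subset of size `p` of `{0,…,n}`, then
`E(‖∑_{i∈I} ω_i R_i T_i v‖²) ≤ λ_max (p/(n+1)) a(Pv, v)`, where `T_i = R_i^*` and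
`P = ∑_i ω_i R_i T_i` is the additive Schwarz operator. -/
theorem expectation_norm_sq_randomized_additive_schwarz
    {V : Type*} [NormedAddCommGroup V] [InnerProductSpace ℝ V] [CompleteSpace V]
    {n : ℕ} {W : Fin (n + 1) → Type*}
    [∀ i, NormedAddCommGroup (W i)] [∀ i, InnerProductSpace ℝ (W i)]
    [∀ i, CompleteSpace (W i)]
    (R : ∀ i, W i →L[ℝ] V) (ω : Fin (n + 1) → ℝ) (hω : ∀ i, 0 < ω i)
    (lmax : ℝ) (hlmax : 0 < lmax)
    (hNE2 : ∀ w : ∀ i, W i,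
      ‖∑ i, ω i • R i (w i)‖ ^ 2 ≤ lmax * ∑ i, ω i * ‖w i‖ ^ 2)
    (p : ℕ) (hp1 : 1 ≤ p) (hp2 : p ≤ n + 1) (v : V) :
    (((n + 1).choose p : ℝ))⁻¹ *
        ∑ I ∈ Finset.powersetCard p (Finset.univ : Finset (Fin (n + 1))),
          ‖∑ i ∈ I, ω i • R i ((ContinuousLinearMap.adjoint (R i)) v)‖ ^ 2 ≤
      lmax * ((p : ℝ) / (n + 1)) *
        ⟪(∑ i, ω i • R i ((ContinuousLinearMap.adjoint (R i)) v)), v⟫ :=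
  expectation_norm_sq_randomized_additive_schwarz_general R ω lmax hNE2 p v
end

section
/- (Theorem 1, multi-step bound) Assume the stability bounds (NE1) and (NE2) with constants 0 < λ_min ≤ λ_max, set κ = λ_max/λ_min, and let 0 < ξ < 2/λ_max. Let u ∈ V, let p_0, p_1, … be integers with 1 ≤ p_s ≤ n+1, and let I_0, I_1, … be independent random subsets of {0,1,…,n}, where I_s is uniform among subsets of size p_s. Define the random error sequence by e^{(0)} = u and e^{(s+1)} = e^{(s)} − ξ Σ_{i∈I_s} ω_i R_i T_i e^{(s)}. Then for every m ≥ 1, E(‖e^{(m)}‖²) ≤ ∏_{s=0}^{m−1} (1 − λ_max ξ (2 − λ_max ξ) p_s / (κ (n+1))) · ‖u‖². -/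
/-! A step with index set `I` maps `e` to `e − ξ S_I e`, `S_I = ∑_{i ∈ I} ω_i R_i T_i`. Expanding
the square and using (NE2) restricted to `I` gives
`‖e − ξ S_I e‖² ≤ ‖e‖² − ξ (2 − λ_max ξ) ∑_{i ∈ I} ω_i ‖T_i e‖²`.
Averaging over all `p`-subsets `I` turns `∑_{i ∈ I}` into `p/(n+1) ∑_i`, since each index lies in
`C(n, p−1)` of the `C(n+1, p)` subsets, and (NE1) bounds `∑_i ω_i ‖T_i e‖²` below by
`λ_min ‖e‖²`. This contracts the mean square error by the factor of step `s`; conditioning on the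
first `m` subsets and peeling off the last step, the factors multiply. -/

open scoped RealInnerProductSpace

/-- The stochastic subspace correction error sequence (recursion (Rec0)):
`e⁽⁰⁾ = u`, `e⁽ˢ⁺¹⁾ = e⁽ˢ⁾ − ξ ∑_{i ∈ Iₛ} ω_i R_i T_i e⁽ˢ⁾`, where `T_i = R_i^*`. -/
noncomputable def errSeq
    {V : Type*} [NormedAddCommGroup V] [InnerProductSpace ℝ V] [CompleteSpace V]
    {n : ℕ} {W : Fin (n + 1) → Type*}
    [∀ i, NormedAddCommGroup (W i)] [∀ i, InnerProductSpace ℝ (W i)]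
    [∀ i, CompleteSpace (W i)]
    (R : ∀ i, W i →L[ℝ] V) (ω : Fin (n + 1) → ℝ) (ξ : ℝ) (u : V)
    (Is : ℕ → Finset (Fin (n + 1))) : ℕ → V
  | 0 => u
  | s + 1 =>
      errSeq R ω ξ u Is s -
        ξ • ∑ i ∈ Is s,
          ω i • R i ((ContinuousLinearMap.adjoint (R i)) (errSeq R ω ξ u Is s))

open Finset

lemma Finset.sum_powersetCard_sum {α M : Type*} [DecidableEq α] [AddCommMonoid M]
    (s : Finset α) {q : ℕ} (hq : 1 ≤ q) (f : α → M) :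
    ∑ K ∈ powersetCard q s, ∑ i ∈ K, f i = (#s - 1).choose (q - 1) • ∑ i ∈ s, f i := by
  rw [sum_comm' (s' := fun i => {K ∈ powersetCard q s | {i} ⊆ K}) (t' := s), smul_sum]
  · refine sum_congr rfl fun i hi => ?_
    rw [sum_const, card_filter_powersetCard_subset _ _ _ (singleton_subset_iff.2 hi)
      (by simpa using hq), card_singleton]
  · intro K i
    simp only [mem_powersetCard, mem_filter, singleton_subset_iff]
    exact ⟨fun ⟨⟨hKs, hK⟩, hi⟩ => ⟨⟨⟨hKs, hK⟩, hi⟩, hKs hi⟩, fun h => ⟨h.1.1, h.1.2⟩⟩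

lemma Fintype.sum_piFinset_eq_sum_sum_snoc {β M : Type*} [AddCommMonoid M] {m : ℕ}
    (S : Fin (m + 1) → Finset β) (g : (Fin (m + 1) → β) → M) :
    ∑ J ∈ piFinset S, g J =
      ∑ J ∈ piFinset (Fin.init S), ∑ K ∈ S (Fin.last m), g (Fin.snoc J K) := by
  have hS : piFinset S =
      (S (Fin.last m) ×ˢ piFinset (Fin.init S)).map (Fin.snocEquiv fun _ => β).toEmbedding := by
    simpa using filter_piFinset_eq_map_snocEquiv S (fun _ => True)
  rw [hS, sum_map, sum_product_right]
  rfl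

lemma contraction_factor_nonneg {lmin lmax : ℝ} (hlmin : 0 < lmin) (hminmax : lmin ≤ lmax)
    (x : ℝ) {n q : ℕ} (hq : q ≤ n + 1) :
    0 ≤ 1 - x * (2 - x) * (q : ℝ) / ((lmax / lmin) * (n + 1)) := by
  have hx : x * (2 - x) ≤ 1 := by nlinarith [sq_nonneg (1 - x)]
  have hκ : 1 ≤ lmax / lmin := (one_le_div hlmin).2 hminmax
  have hq' : (q : ℝ) ≤ n + 1 := by exact_mod_cast hq
  have hnum : x * (2 - x) * q ≤ (lmax / lmin) * (n + 1) := by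
    nlinarith [mul_le_mul_of_nonneg_right hx q.cast_nonneg]
  linarith [div_le_one_of_le₀ hnum (by positivity)]

lemma norm_sq_sum_smul_le_of_NE2 {ι V : Type*} [Fintype ι] [DecidableEq ι]
    [NormedAddCommGroup V] [NormedSpace ℝ V] {W : ι → Type*} [∀ i, NormedAddCommGroup (W i)]
    [∀ i, NormedSpace ℝ (W i)] (R : ∀ i, W i →L[ℝ] V) (ω : ι → ℝ) {lmax : ℝ}
    (hNE2 : ∀ w : ∀ i, W i, ‖∑ i, ω i • R i (w i)‖ ^ 2 ≤ lmax * ∑ i, ω i * ‖w i‖ ^ 2)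
    (K : Finset ι) (w : ∀ i, W i) :
    ‖∑ i ∈ K, ω i • R i (w i)‖ ^ 2 ≤ lmax * ∑ i ∈ K, ω i * ‖w i‖ ^ 2 := by
  simpa [apply_ite, sum_ite_mem] using hNE2 fun i => if i ∈ K then w i else 0

section SubspaceCorrection

variable {V : Type*} [NormedAddCommGroup V] [InnerProductSpace ℝ V] [CompleteSpace V]
    {n : ℕ} {W : Fin (n + 1) → Type*}
    [∀ i, NormedAddCommGroup (W i)] [∀ i, InnerProductSpace ℝ (W i)]
    [∀ i, CompleteSpace (W i)]
    (R : ∀ i, W i →L[ℝ] V) (ω : Fin (n + 1) → ℝ)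

noncomputable def subspaceCorrectionStep (ξ : ℝ) (K : Finset (Fin (n + 1))) (e : V) : V :=
  e - ξ • ∑ i ∈ K, ω i • R i ((ContinuousLinearMap.adjoint (R i)) e)

lemma errSeq_succ (ξ : ℝ) (u : V) (Is : ℕ → Finset (Fin (n + 1))) (s : ℕ) :
    errSeq R ω ξ u Is (s + 1) = subspaceCorrectionStep R ω ξ (Is s) (errSeq R ω ξ u Is s) :=
  rfl

lemma errSeq_congr (ξ : ℝ) (u : V) {Is Is' : ℕ → Finset (Fin (n + 1))} :
    ∀ {m : ℕ}, (∀ s < m, Is s = Is' s) → errSeq R ω ξ u Is m = errSeq R ω ξ u Is' m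
  | 0, _ => rfl
  | m + 1, h => by
    rw [errSeq_succ, errSeq_succ, h m m.lt_succ_self,
      errSeq_congr ξ u fun s hs => h s (hs.trans m.lt_succ_self)]

lemma errSeq_snoc (ξ : ℝ) (u : V) {m : ℕ} (J : Fin m → Finset (Fin (n + 1)))
    (K : Finset (Fin (n + 1))) :
    errSeq R ω ξ u (fun s => if h : s < m + 1 then
        Fin.snoc (α := fun _ => Finset (Fin (n + 1))) J K ⟨s, h⟩ else ∅) (m + 1) =
      subspaceCorrectionStep R ω ξ K
        (errSeq R ω ξ u (fun s => if h : s < m then J ⟨s, h⟩ else ∅) m) := by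
  rw [errSeq_succ, dif_pos m.lt_succ_self]
  refine congrArg₂ (subspaceCorrectionStep R ω ξ) (Fin.snoc_last (α := fun _ => _) K J)
    (errSeq_congr R ω ξ u fun s hs => ?_)
  rw [dif_pos (hs.trans m.lt_succ_self), dif_pos hs]
  exact Fin.snoc_castSucc (α := fun _ => Finset (Fin (n + 1))) K J ⟨s, hs⟩

lemma inner_sum_smul_adjoint (K : Finset (Fin (n + 1))) (e : V) :
    ⟪∑ i ∈ K, ω i • R i ((ContinuousLinearMap.adjoint (R i)) e), e⟫ =
      ∑ i ∈ K, ω i * ‖(ContinuousLinearMap.adjoint (R i)) e‖ ^ 2 := by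
  rw [sum_inner]
  refine sum_congr rfl fun i _ => ?_
  rw [real_inner_smul_left, ← ContinuousLinearMap.adjoint_inner_right,
    real_inner_self_eq_norm_sq]

lemma norm_sq_subspaceCorrectionStep_le {lmax : ℝ}
    (hNE2 : ∀ w : ∀ i, W i, ‖∑ i, ω i • R i (w i)‖ ^ 2 ≤ lmax * ∑ i, ω i * ‖w i‖ ^ 2)
    (ξ : ℝ) (K : Finset (Fin (n + 1))) (e : V) :
    ‖subspaceCorrectionStep R ω ξ K e‖ ^ 2 ≤
      ‖e‖ ^ 2 - ξ * (2 - lmax * ξ) *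
        ∑ i ∈ K, ω i * ‖(ContinuousLinearMap.adjoint (R i)) e‖ ^ 2 := by
  have hS := norm_sq_sum_smul_le_of_NE2 R ω hNE2 K fun i => (ContinuousLinearMap.adjoint (R i)) e
  rw [subspaceCorrectionStep, norm_sub_sq_real, real_inner_smul_right, real_inner_comm,
    inner_sum_smul_adjoint, norm_smul, mul_pow, Real.norm_eq_abs, sq_abs]
  nlinarith [mul_le_mul_of_nonneg_left hS (sq_nonneg ξ)]

lemma sum_norm_sq_subspaceCorrectionStep_le {lmin lmax : ℝ}
    (hlmin : 0 < lmin) (hminmax : lmin ≤ lmax)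
    (hNE1 : ∀ v : V,
      lmin * ‖v‖ ^ 2 ≤ ⟪(∑ i, ω i • R i ((ContinuousLinearMap.adjoint (R i)) v)), v⟫)
    (hNE2 : ∀ w : ∀ i, W i, ‖∑ i, ω i • R i (w i)‖ ^ 2 ≤ lmax * ∑ i, ω i * ‖w i‖ ^ 2)
    {ξ : ℝ} (hξ0 : 0 < ξ) (hξ2 : ξ < 2 / lmax) {q : ℕ} (hq : 1 ≤ q) (e : V) :
    ∑ K ∈ powersetCard q univ, ‖subspaceCorrectionStep R ω ξ K e‖ ^ 2 ≤
      (n + 1).choose q *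
        (1 - lmax * ξ * (2 - lmax * ξ) * (q : ℝ) / ((lmax / lmin) * (n + 1))) * ‖e‖ ^ 2 := by
  set f := fun i => ω i * ‖(ContinuousLinearMap.adjoint (R i)) e‖ ^ 2
  have hlmax : 0 < lmax := hlmin.trans_le hminmax
  have hc : 0 ≤ ξ * (2 - lmax * ξ) := by
    have := (lt_div_iff₀ hlmax).1 hξ2
    nlinarith
  have hNE1e : lmin * ‖e‖ ^ 2 ≤ ∑ i, f i := (hNE1 e).trans_eq (inner_sum_smul_adjoint R ω _ e)
  have hchoose : (n.choose (q - 1) : ℝ) * (n + 1) = (n + 1).choose q * q := by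
    obtain ⟨k, rfl⟩ := Nat.exists_eq_add_of_le' hq
    exact_mod_cast (mul_comm _ _).trans (Nat.add_one_mul_choose_eq n k)
  calc ∑ K ∈ powersetCard q univ, ‖subspaceCorrectionStep R ω ξ K e‖ ^ 2
      ≤ ∑ K ∈ powersetCard q univ, (‖e‖ ^ 2 - ξ * (2 - lmax * ξ) * ∑ i ∈ K, f i) :=
        sum_le_sum fun K _ => norm_sq_subspaceCorrectionStep_le R ω hNE2 ξ K e
    _ = (n + 1).choose q * ‖e‖ ^ 2 - ξ * (2 - lmax * ξ) * (n.choose (q - 1) * ∑ i, f i) := by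
        rw [sum_sub_distrib, sum_const, ← mul_sum, sum_powersetCard_sum _ hq, card_univ,
          Fintype.card_fin, card_powersetCard, card_univ, Fintype.card_fin, nsmul_eq_mul,
          nsmul_eq_mul, Nat.add_sub_cancel]
    _ ≤ (n + 1).choose q * ‖e‖ ^ 2 -
          ξ * (2 - lmax * ξ) * (n.choose (q - 1) * (lmin * ‖e‖ ^ 2)) := by
        gcongr
    _ = _ := by
        field_simp
        linear_combination (lmax * ξ - 2) * ‖e‖ ^ 2 * lmin * ξ * hchoose

lemma sum_norm_sq_errSeq_le {lmin lmax : ℝ}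
    (hlmin : 0 < lmin) (hminmax : lmin ≤ lmax)
    (hNE1 : ∀ v : V,
      lmin * ‖v‖ ^ 2 ≤ ⟪(∑ i, ω i • R i ((ContinuousLinearMap.adjoint (R i)) v)), v⟫)
    (hNE2 : ∀ w : ∀ i, W i, ‖∑ i, ω i • R i (w i)‖ ^ 2 ≤ lmax * ∑ i, ω i * ‖w i‖ ^ 2)
    {ξ : ℝ} (hξ0 : 0 < ξ) (hξ2 : ξ < 2 / lmax) (u : V) {p : ℕ → ℕ}
    (hp : ∀ s, 1 ≤ p s ∧ p s ≤ n + 1) (m : ℕ) :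
    ∑ J ∈ Fintype.piFinset (fun s : Fin m => powersetCard (p s.val) univ),
        ‖errSeq R ω ξ u (fun s => if h : s < m then J ⟨s, h⟩ else ∅) m‖ ^ 2 ≤
      (∏ s ∈ range m, ((n + 1).choose (p s) *
        (1 - lmax * ξ * (2 - lmax * ξ) * (p s : ℝ) / ((lmax / lmin) * (n + 1))))) * ‖u‖ ^ 2 := by
  induction m with
  | zero => simp [errSeq]
  | succ m ih =>
    set c := fun s => ((n + 1).choose (p s) : ℝ) *
      (1 - lmax * ξ * (2 - lmax * ξ) * (p s : ℝ) / ((lmax / lmin) * (n + 1)))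
    have hc : 0 ≤ c m := mul_nonneg (Nat.cast_nonneg _)
      (contraction_factor_nonneg hlmin hminmax _ (hp m).2)
    rw [Fintype.sum_piFinset_eq_sum_sum_snoc, prod_range_succ]
    simp only [errSeq_snoc]
    calc _ ≤ ∑ J ∈ Fintype.piFinset (fun s : Fin m => powersetCard (p s.val) univ),
            c m * ‖errSeq R ω ξ u (fun s => if h : s < m then J ⟨s, h⟩ else ∅) m‖ ^ 2 :=
          sum_le_sum fun J _ => sum_norm_sq_subspaceCorrectionStep_le R ω hlmin hminmax hNE1
            hNE2 hξ0 hξ2 (hp m).1 _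
      _ ≤ c m * ((∏ s ∈ range m, c s) * ‖u‖ ^ 2) := by
          rw [← mul_sum]
          exact mul_le_mul_of_nonneg_left ih hc
      _ = _ := by ring

end SubspaceCorrection

theorem multi_step_expected_error_reduction_general
    {V : Type*} [NormedAddCommGroup V] [InnerProductSpace ℝ V] [CompleteSpace V]
    {n : ℕ} {W : Fin (n + 1) → Type*}
    [∀ i, NormedAddCommGroup (W i)] [∀ i, InnerProductSpace ℝ (W i)]
    [∀ i, CompleteSpace (W i)]
    (R : ∀ i, W i →L[ℝ] V) (ω : Fin (n + 1) → ℝ)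
    (lmin lmax : ℝ) (hlmin : 0 < lmin) (hminmax : lmin ≤ lmax)
    (hNE1 : ∀ v : V,
      lmin * ‖v‖ ^ 2 ≤ ⟪(∑ i, ω i • R i ((ContinuousLinearMap.adjoint (R i)) v)), v⟫)
    (hNE2 : ∀ w : ∀ i, W i,
      ‖∑ i, ω i • R i (w i)‖ ^ 2 ≤ lmax * ∑ i, ω i * ‖w i‖ ^ 2)
    (ξ : ℝ) (hξ0 : 0 < ξ) (hξ2 : ξ < 2 / lmax)
    (u : V) (p : ℕ → ℕ) (hp : ∀ s, 1 ≤ p s ∧ p s ≤ n + 1)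
    (m : ℕ) :
    (∏ s ∈ Finset.range m, ((n + 1).choose (p s) : ℝ))⁻¹ *
        ∑ J ∈ Fintype.piFinset
            (fun s : Fin m =>
              Finset.powersetCard (p s.val) (Finset.univ : Finset (Fin (n + 1)))),
          ‖errSeq R ω ξ u (fun s => if h : s < m then J ⟨s, h⟩ else ∅) m‖ ^ 2 ≤
      (∏ s ∈ Finset.range m,
          (1 - lmax * ξ * (2 - lmax * ξ) * (p s : ℝ) / ((lmax / lmin) * (n + 1)))) *
        ‖u‖ ^ 2 := by
  have hchoose : 0 < ∏ s ∈ range m, ((n + 1).choose (p s) : ℝ) :=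
    prod_pos fun s _ => by exact_mod_cast Nat.choose_pos (hp s).2
  rw [inv_mul_le_iff₀ hchoose, ← mul_assoc, ← prod_mul_distrib]
  exact sum_norm_sq_errSeq_le R ω hlmin hminmax hNE1 hNE2 hξ0 hξ2 u hp m

/-- **Theorem 1, multi-step bound.** Under (NE1), (NE2) with
`0 < λ_min ≤ λ_max`, `κ = λ_max/λ_min`, `0 < ξ < 2/λ_max`, and independent uniform random
subsets `Iₛ` of sizes `pₛ` of `{0,…,n}`, the error sequence of the stochastic subspace
correction method satisfies
`E(‖e⁽ᵐ⁾‖²) ≤ ∏_{s<m} (1 − λ_max ξ (2 − λ_max ξ) pₛ/(κ(n+1))) ‖u‖²`.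
The expectation is the average over the product of the uniform distributions on the
collections of `pₛ`-element subsets, `s = 0,…,m−1`. -/
theorem multi_step_expected_error_reduction
    {V : Type*} [NormedAddCommGroup V] [InnerProductSpace ℝ V] [CompleteSpace V]
    {n : ℕ} {W : Fin (n + 1) → Type*}
    [∀ i, NormedAddCommGroup (W i)] [∀ i, InnerProductSpace ℝ (W i)]
    [∀ i, CompleteSpace (W i)]
    (R : ∀ i, W i →L[ℝ] V) (ω : Fin (n + 1) → ℝ) (hω : ∀ i, 0 < ω i)
    (lmin lmax : ℝ) (hlmin : 0 < lmin) (hminmax : lmin ≤ lmax)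
    (hNE1 : ∀ v : V,
      lmin * ‖v‖ ^ 2 ≤ ⟪(∑ i, ω i • R i ((ContinuousLinearMap.adjoint (R i)) v)), v⟫)
    (hNE2 : ∀ w : ∀ i, W i,
      ‖∑ i, ω i • R i (w i)‖ ^ 2 ≤ lmax * ∑ i, ω i * ‖w i‖ ^ 2)
    (ξ : ℝ) (hξ0 : 0 < ξ) (hξ2 : ξ < 2 / lmax)
    (u : V) (p : ℕ → ℕ) (hp : ∀ s, 1 ≤ p s ∧ p s ≤ n + 1)
    (m : ℕ) (hm : 1 ≤ m) :
    (∏ s ∈ Finset.range m, ((n + 1).choose (p s) : ℝ))⁻¹ *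
        ∑ J ∈ Fintype.piFinset
            (fun s : Fin m =>
              Finset.powersetCard (p s.val) (Finset.univ : Finset (Fin (n + 1)))),
          ‖errSeq R ω ξ u (fun s => if h : s < m then J ⟨s, h⟩ else ∅) m‖ ^ 2 ≤
      (∏ s ∈ Finset.range m,
          (1 - lmax * ξ * (2 - lmax * ξ) * (p s : ℝ) / ((lmax / lmin) * (n + 1)))) *
        ‖u‖ ^ 2 :=
  multi_step_expected_error_reduction_general R ω lmin lmax hlmin hminmax hNE1 hNE2 ξ hξ0 hξ2 u p hp
    m
end

section
/- (Steepest descent bound) Assume the stability bounds (NE1) and (NE2) with constants 0 < λ_min ≤ λ_max, and set κ = λ_max/λ_min. Let e ∈ V, let 1 ≤ p ≤ n+1, and let I be a uniform random subset of size p of {0,1,…,n}. Set d = Σ_{i∈I} ω_i R_i T_i e and let ξ* = a(e,d)/a(d,d) if d ≠ 0 and ξ* = 0 otherwise (the steepest descent choice, which minimizes ‖e − ξ d‖² over ξ ∈ ℝ). Then E(‖e − ξ* d‖²) ≤ (1 − p/(κ (n+1))) ‖e‖². -/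
lemma sd_count_aux {n p : ℕ} (hp1 : 1 ≤ p) (i : Fin (n+1)) :
    ((Finset.powersetCard p (Finset.univ : Finset (Fin (n+1)))).filter
        (fun I => i ∈ I)).card = n.choose (p-1) := by
  classical
  have hcard : (Finset.univ.erase i : Finset (Fin (n+1))).card = n := by
    rw [Finset.card_erase_of_mem (Finset.mem_univ i), Finset.card_univ]
    simp
  have hpc := Finset.card_powersetCard (p-1) (Finset.univ.erase i)
  rw [hcard] at hpc
  rw [← hpc]
  refine Finset.card_bij' (fun I _ => I.erase i) (fun J _ => insert i J) ?hi ?hj ?left ?right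
  case hi =>
    intro I hI
    simp only [Finset.mem_filter, Finset.mem_powersetCard] at hI
    refine Finset.mem_powersetCard.2 ⟨fun x hx => ?_, ?_⟩
    · exact Finset.mem_erase.2 ⟨(Finset.mem_erase.1 hx).1, Finset.mem_univ _⟩
    · rw [Finset.card_erase_of_mem hI.2, hI.1.2]
  case hj =>
    intro J hJ
    rw [Finset.mem_powersetCard] at hJ
    have hiJ : i ∉ J := fun h => by
      have := hJ.1 h
      simp at this
    refine Finset.mem_filter.2 ⟨Finset.mem_powersetCard.2
      ⟨fun x _ => Finset.mem_univ x, ?_⟩, Finset.mem_insert_self i J⟩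
    rw [Finset.card_insert_of_notMem hiJ, hJ.2]
    omega
  case left =>
    intro I hI
    exact Finset.insert_erase (Finset.mem_filter.1 hI).2
  case right =>
    intro J hJ
    rw [Finset.mem_powersetCard] at hJ
    have hiJ : i ∉ J := fun h => by
      have := hJ.1 h
      simp at this
    exact Finset.erase_insert hiJ

open scoped RealInnerProductSpace

/-- **steepest descent bound.** Under (NE1), (NE2) with `0 < λ_min ≤ λ_max`,
`κ = λ_max/λ_min`, a uniform random subset `I` of size `p` of `{0,…,n}`, and the steepest
descent relaxation parameter `ξ* = a(e,d)/a(d,d)` (with `d = ∑_{i∈I} ω_i R_i T_i e`, and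
`ξ* = 0` when `d = 0`), one has `E(‖e − ξ* d‖²) ≤ (1 − p/(κ(n+1))) ‖e‖²`. -/
theorem steepest_descent_expected_error_reduction
    {V : Type*} [NormedAddCommGroup V] [InnerProductSpace ℝ V] [CompleteSpace V]
    {n : ℕ} {W : Fin (n + 1) → Type*}
    [∀ i, NormedAddCommGroup (W i)] [∀ i, InnerProductSpace ℝ (W i)]
    [∀ i, CompleteSpace (W i)]
    (R : ∀ i, W i →L[ℝ] V) (ω : Fin (n + 1) → ℝ) (hω : ∀ i, 0 < ω i)
    (lmin lmax : ℝ) (hlmin : 0 < lmin) (hminmax : lmin ≤ lmax)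
    (hNE1 : ∀ v : V,
      lmin * ‖v‖ ^ 2 ≤ ⟪(∑ i, ω i • R i ((ContinuousLinearMap.adjoint (R i)) v)), v⟫)
    (hNE2 : ∀ w : ∀ i, W i,
      ‖∑ i, ω i • R i (w i)‖ ^ 2 ≤ lmax * ∑ i, ω i * ‖w i‖ ^ 2)
    (e : V) (p : ℕ) (hp1 : 1 ≤ p) (hp2 : p ≤ n + 1)
    (d : Finset (Fin (n + 1)) → V)
    (hd : ∀ I, d I = ∑ i ∈ I, ω i • R i ((ContinuousLinearMap.adjoint (R i)) e))
    (ξstar : Finset (Fin (n + 1)) → ℝ)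
    (hξstar : ∀ I, (d I ≠ 0 → ξstar I = ⟪e, d I⟫ / ⟪d I, d I⟫) ∧ (d I = 0 → ξstar I = 0)) :
    (((n + 1).choose p : ℝ))⁻¹ *
        ∑ I ∈ Finset.powersetCard p (Finset.univ : Finset (Fin (n + 1))),
          ‖e - ξstar I • d I‖ ^ 2 ≤
      (1 - (p : ℝ) / ((lmax / lmin) * (n + 1))) * ‖e‖ ^ 2 := by
  classical
  have hlmax : (0:ℝ) < lmax := lt_of_lt_of_le hlmin hminmax
  set T : ∀ i, V →L[ℝ] W i := fun i => ContinuousLinearMap.adjoint (R i) with hT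
  set c : Fin (n+1) → ℝ := fun i => ω i * ‖T i e‖ ^ 2 with hc
  have hc0 : ∀ i, 0 ≤ c i := fun i => mul_nonneg (hω i).le (by positivity)
  have hterm : ∀ i : Fin (n+1), ⟪e, ω i • R i (T i e)⟫ = c i := by
    intro i
    rw [real_inner_smul_right, ← ContinuousLinearMap.adjoint_inner_left,
      real_inner_self_eq_norm_sq]
  have hinner : ∀ I : Finset (Fin (n+1)), ⟪e, d I⟫ = ∑ i ∈ I, c i := by
    intro I
    rw [hd, inner_sum]
    exact Finset.sum_congr rfl fun i _ => hterm i
  have hS : lmin * ‖e‖ ^ 2 ≤ ∑ i, c i := by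
    calc lmin * ‖e‖ ^ 2 ≤ ⟪(∑ i, ω i • R i (T i e)), e⟫ := hNE1 e
      _ = ∑ i, c i := by
          rw [sum_inner]
          exact Finset.sum_congr rfl fun i _ => by
            rw [real_inner_comm]; exact hterm i
  have hdle : ∀ I : Finset (Fin (n+1)), ‖d I‖ ^ 2 ≤ lmax * ∑ i ∈ I, c i := by
    intro I
    have h := hNE2 (fun i => if i ∈ I then T i e else 0)
    have h1 : (∑ i, ω i • R i (if i ∈ I then T i e else 0)) = d I := by
      rw [hd]
      rw [show (∑ i, ω i • R i (if i ∈ I then T i e else 0))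
          = ∑ i, (if i ∈ I then ω i • R i (T i e) else 0) from
        Finset.sum_congr rfl fun i _ => by split <;> simp]
      rw [Finset.sum_ite_mem, Finset.univ_inter]
    have h2 : (∑ i, ω i * ‖(if i ∈ I then T i e else 0)‖ ^ 2) = ∑ i ∈ I, c i := by
      rw [show (∑ i, ω i * ‖(if i ∈ I then T i e else 0)‖ ^ 2)
          = ∑ i, (if i ∈ I then c i else 0) from
        Finset.sum_congr rfl fun i _ => by split <;> simp [hc]]
      rw [Finset.sum_ite_mem, Finset.univ_inter]
    rw [h1, h2] at h
    exact h
  have perI : ∀ I : Finset (Fin (n+1)),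
      ‖e - ξstar I • d I‖ ^ 2 ≤ ‖e‖ ^ 2 - (∑ i ∈ I, c i) / lmax := by
    intro I
    set s : ℝ := ∑ i ∈ I, c i with hs
    have hs0 : 0 ≤ s := Finset.sum_nonneg fun i _ => hc0 i
    by_cases hdz : d I = 0
    · have hx : ξstar I = 0 := (hξstar I).2 hdz
      have hs0' : s = 0 := by
        rw [hs, ← hinner, hdz, inner_zero_right]
      rw [hx, hdz, smul_zero, sub_zero, hs0', zero_div, sub_zero]
    · have hx : ξstar I = ⟪e, d I⟫ / ⟪d I, d I⟫ := (hξstar I).1 hdz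
      have ht : (0:ℝ) < ‖d I‖ ^ 2 := by
        have := norm_pos_iff.2 hdz
        positivity
      have hdd : ⟪d I, d I⟫ = ‖d I‖ ^ 2 := real_inner_self_eq_norm_sq (d I)
      have hx' : ξstar I = s / ‖d I‖ ^ 2 := by rw [hx, hdd, hinner]
      have hxt : ξstar I * ‖d I‖ ^ 2 = s := by
        rw [hx']; field_simp
      have hnorm : ‖ξstar I • d I‖ ^ 2 = ξstar I ^ 2 * ‖d I‖ ^ 2 := by
        rw [norm_smul, mul_pow, Real.norm_eq_abs, sq_abs]
      have hexp : ‖e - ξstar I • d I‖ ^ 2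
          = ‖e‖ ^ 2 - 2 * (ξstar I * s) + ξstar I ^ 2 * ‖d I‖ ^ 2 := by
        rw [norm_sub_sq_real, real_inner_smul_right, hinner, hnorm, ← hs]
      have hx0 : 0 ≤ ξstar I := by
        rw [hx']; exact div_nonneg hs0 ht.le
      have hle := hdle I
      rw [hexp]
      have key : s / lmax ≤ ξstar I * s := by
        rw [div_le_iff₀ hlmax]
        calc s = ξstar I * ‖d I‖ ^ 2 := hxt.symm
          _ ≤ ξstar I * (lmax * s) := mul_le_mul_of_nonneg_left hle hx0
          _ = ξstar I * s * lmax := by ring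
      nlinarith [hxt, key]
  set Pc := Finset.powersetCard p (Finset.univ : Finset (Fin (n+1))) with hPc
  have hNcard : Pc.card = (n+1).choose p := by
    rw [hPc, Finset.card_powersetCard, Finset.card_univ, Fintype.card_fin]
  have hNpos : (0:ℝ) < ((n+1).choose p : ℝ) := by
    exact_mod_cast Nat.choose_pos hp2
  have hdouble : ∑ I ∈ Pc, ∑ i ∈ I, c i = (n.choose (p-1) : ℝ) * ∑ i, c i := by
    have hstep : ∀ I ∈ Pc, ∑ i ∈ I, c i = ∑ i, (if i ∈ I then c i else 0) := by
      intro I _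
      rw [Finset.sum_ite_mem, Finset.univ_inter]
    rw [Finset.sum_congr rfl hstep, Finset.sum_comm, Finset.mul_sum]
    refine Finset.sum_congr rfl fun i _ => ?_
    rw [← Finset.sum_filter, Finset.sum_const, sd_count_aux hp1 i, nsmul_eq_mul]
  have hsum : ∑ I ∈ Pc, ‖e - ξstar I • d I‖ ^ 2
      ≤ ((n+1).choose p : ℝ) * ‖e‖ ^ 2 - (n.choose (p-1) : ℝ) * (∑ i, c i) / lmax := by
    calc ∑ I ∈ Pc, ‖e - ξstar I • d I‖ ^ 2
        ≤ ∑ I ∈ Pc, (‖e‖ ^ 2 - (∑ i ∈ I, c i) / lmax) :=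
          Finset.sum_le_sum fun I _ => perI I
      _ = (Pc.card : ℝ) * ‖e‖ ^ 2 - (∑ I ∈ Pc, ∑ i ∈ I, c i) / lmax := by
          rw [Finset.sum_sub_distrib, Finset.sum_const, nsmul_eq_mul, Finset.sum_div]
      _ = ((n+1).choose p : ℝ) * ‖e‖ ^ 2 - (n.choose (p-1) : ℝ) * (∑ i, c i) / lmax := by
          rw [hNcard, hdouble]
  have hMN : ((n:ℝ)+1) * (n.choose (p-1) : ℝ) = ((n+1).choose p : ℝ) * p := by
    have h := Nat.add_one_mul_choose_eq n (p-1)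
    have hp' : p - 1 + 1 = p := Nat.succ_pred_eq_of_pos hp1
    rw [hp'] at h
    exact_mod_cast h
  have hM0 : (0:ℝ) ≤ (n.choose (p-1) : ℝ) := Nat.cast_nonneg _
  have hsum2 : ∑ I ∈ Pc, ‖e - ξstar I • d I‖ ^ 2
      ≤ ((n+1).choose p : ℝ) * ‖e‖ ^ 2
        - (n.choose (p-1) : ℝ) * (lmin * ‖e‖ ^ 2) / lmax := by
    refine hsum.trans ?_
    have : (n.choose (p-1) : ℝ) * (lmin * ‖e‖ ^ 2) / lmax
        ≤ (n.choose (p-1) : ℝ) * (∑ i, c i) / lmax := by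
      gcongr
    linarith
  have hfinal : (((n+1).choose p : ℝ))⁻¹ *
      (((n+1).choose p : ℝ) * ‖e‖ ^ 2
        - (n.choose (p-1) : ℝ) * (lmin * ‖e‖ ^ 2) / lmax)
      = (1 - (p : ℝ) / ((lmax / lmin) * (n + 1))) * ‖e‖ ^ 2 := by
    have hNe : ((n+1).choose p : ℝ) ≠ 0 := ne_of_gt hNpos
    have hn1 : ((n:ℝ)+1) ≠ 0 := by positivity
    have hM : (n.choose (p-1) : ℝ) = ((n+1).choose p : ℝ) * p / ((n:ℝ)+1) := by
      field_simp
      linarith [hMN]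
    rw [hM]
    field_simp
  calc (((n + 1).choose p : ℝ))⁻¹ * ∑ I ∈ Pc, ‖e - ξstar I • d I‖ ^ 2
      ≤ (((n+1).choose p : ℝ))⁻¹ *
        (((n+1).choose p : ℝ) * ‖e‖ ^ 2
          - (n.choose (p-1) : ℝ) * (lmin * ‖e‖ ^ 2) / lmax) :=
        mul_le_mul_of_nonneg_left hsum2 (inv_nonneg.2 hNpos.le)
    _ = (1 - (p : ℝ) / ((lmax / lmin) * (n + 1))) * ‖e‖ ^ 2 := hfinal
end

section
/- (Inequality (EU) in the proof of Theorem 2) Assume the stability bound (NE2) with constant λ_max, and let λ̄ ≥ λ_max. Let e_w ∈ V, let 1 ≤ p ≤ n+1, and let I be a uniform random subset of size p of {0,1,…,n}. Then (p/(n+1)) a(P e_w, e_w) ≤ λ̄ ( ‖e_w‖² − E(‖e_w − λ̄^{-1} Σ_{i∈I} ω_i R_i T_i e_w‖²) ). -/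
/-!
For a subset `I` put `S_I = ∑_{i ∈ I} ω_i R_i T_i e`. Then `⟪S_I, e⟫ = ∑_{i ∈ I} ω_i ‖T_i e‖²`,
and (NE2) applied to the family that vanishes off `I` gives `‖S_I‖² ≤ λ̄ ⟪S_I, e⟫`. Expanding the
square, `λ̄ (‖e‖² - ‖e - λ̄⁻¹ S_I‖²) = 2 ⟪S_I, e⟫ - λ̄⁻¹ ‖S_I‖² ≥ ⟪S_I, e⟫`. Averaging over `I`,
every index lies in the fraction `p / (n + 1)` of the `p`-subsets, so the mean of `⟪S_I, e⟫` is
`p / (n + 1) · a(P e, e)`.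
-/

open Finset
open scoped RealInnerProductSpace

theorem Finset.sum_powersetCard_succ_sum {α β : Type*} [DecidableEq α] [AddCommMonoid β]
    (s : Finset α) (k : ℕ) (f : α → β) :
    ∑ t ∈ s.powersetCard (k + 1), ∑ i ∈ t, f i = (#s - 1).choose k • ∑ i ∈ s, f i := by
  rw [sum_comm' (t' := s) (s' := fun i => {t ∈ s.powersetCard (k + 1) | {i} ⊆ t}), smul_sum]
  · refine sum_congr rfl fun i hi => ?_
    rw [sum_const, card_filter_powersetCard_subset _ _ _ (singleton_subset_iff.2 hi) (by simp),
      card_singleton, Nat.add_sub_cancel]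
  · intro t i
    simp only [mem_filter, mem_powersetCard, singleton_subset_iff]
    exact ⟨fun ⟨⟨hts, hk⟩, hit⟩ => ⟨⟨⟨hts, hk⟩, hit⟩, hts hit⟩, fun ⟨h, _⟩ => ⟨h.1, h.2⟩⟩

theorem Finset.inv_choose_mul_sum_powersetCard_sum {α 𝕜 : Type*} [DecidableEq α] [Field 𝕜]
    [CharZero 𝕜] (s : Finset α) {p : ℕ} (hp : p ≤ #s) (f : α → 𝕜) :
    ((#s).choose p : 𝕜)⁻¹ * ∑ t ∈ s.powersetCard p, ∑ i ∈ t, f i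
      = p / #s * ∑ i ∈ s, f i := by
  rcases p with _ | k
  · simp
  obtain ⟨m, hm⟩ : ∃ m, #s = m + 1 := ⟨#s - 1, by omega⟩
  have hchoose : ((m + 1).choose (k + 1) : 𝕜) * (k + 1) = (m + 1) * m.choose k := by
    exact_mod_cast (Nat.add_one_mul_choose_eq m k).symm
  have hpos : ((m + 1).choose (k + 1) : 𝕜) ≠ 0 := by
    exact_mod_cast (Nat.choose_pos (hm ▸ hp)).ne'
  rw [sum_powersetCard_succ_sum, hm, Nat.add_sub_cancel, nsmul_eq_mul]
  field_simp
  push_cast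
  linear_combination -(∑ i ∈ s, f i) * hchoose

theorem inner_le_mul_sub_norm_sub_inv_smul_sq {E : Type*} [NormedAddCommGroup E]
    [InnerProductSpace ℝ E] {e s : E} {c : ℝ} (hc : 0 < c) (h : ‖s‖ ^ 2 ≤ c * ⟪s, e⟫) :
    ⟪s, e⟫ ≤ c * (‖e‖ ^ 2 - ‖e - c⁻¹ • s‖ ^ 2) := by
  have hexpand : c * (‖e‖ ^ 2 - ‖e - c⁻¹ • s‖ ^ 2) = 2 * ⟪s, e⟫ - c⁻¹ * ‖s‖ ^ 2 := by
    rw [norm_sub_sq_real, real_inner_smul_right, real_inner_comm, norm_smul, mul_pow,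
      Real.norm_of_nonneg (inv_nonneg.2 hc.le)]
    field_simp
    ring
  have hsmall : c⁻¹ * ‖s‖ ^ 2 ≤ ⟪s, e⟫ := (inv_mul_le_iff₀ hc).2 h
  linarith

section Stability

variable {ι V : Type*} {W : ι → Type*}
  [NormedAddCommGroup V] [∀ i, NormedAddCommGroup (W i)]
  [InnerProductSpace ℝ V] [∀ i, InnerProductSpace ℝ (W i)]

theorem norm_sum_sq_le_of_stability [Fintype ι] [DecidableEq ι] {R : ∀ i, W i →L[ℝ] V}
    {ω : ι → ℝ} {c : ℝ}
    (hstab : ∀ w : ∀ i, W i, ‖∑ i, ω i • R i (w i)‖ ^ 2 ≤ c * ∑ i, ω i * ‖w i‖ ^ 2)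
    (I : Finset ι) (w : ∀ i, W i) :
    ‖∑ i ∈ I, ω i • R i (w i)‖ ^ 2 ≤ c * ∑ i ∈ I, ω i * ‖w i‖ ^ 2 := by
  simpa [apply_ite, ← sum_filter] using hstab fun i => if i ∈ I then w i else 0

theorem inner_sum_smul_adjoint_apply_self [CompleteSpace V] [∀ i, CompleteSpace (W i)]
    (R : ∀ i, W i →L[ℝ] V) (ω : ι → ℝ) (I : Finset ι) (e : V) :
    ⟪∑ i ∈ I, ω i • R i ((R i).adjoint e), e⟫ = ∑ i ∈ I, ω i * ‖(R i).adjoint e‖ ^ 2 := by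
  rw [sum_inner]
  refine sum_congr rfl fun i _ => ?_
  rw [real_inner_smul_left, ← ContinuousLinearMap.adjoint_inner_right, real_inner_self_eq_norm_sq]

end Stability

theorem inequality_EU_general
    {V : Type*} [NormedAddCommGroup V] [InnerProductSpace ℝ V] [CompleteSpace V]
    {n : ℕ} {W : Fin (n + 1) → Type*}
    [∀ i, NormedAddCommGroup (W i)] [∀ i, InnerProductSpace ℝ (W i)]
    [∀ i, CompleteSpace (W i)]
    (R : ∀ i, W i →L[ℝ] V) (ω : Fin (n + 1) → ℝ)
    (lmax lbar : ℝ) (hlmax : 0 < lmax) (hbar : lmax ≤ lbar)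
    (hNE2 : ∀ w : ∀ i, W i,
      ‖∑ i, ω i • R i (w i)‖ ^ 2 ≤ lmax * ∑ i, ω i * ‖w i‖ ^ 2)
    (ew : V) (p : ℕ) (hp2 : p ≤ n + 1) :
    ((p : ℝ) / (n + 1)) *
        ⟪(∑ i, ω i • R i ((ContinuousLinearMap.adjoint (R i)) ew)), ew⟫ ≤
      lbar * (‖ew‖ ^ 2 -
        (((n + 1).choose p : ℝ))⁻¹ *
          ∑ I ∈ Finset.powersetCard p (Finset.univ : Finset (Fin (n + 1))),
            ‖ew - lbar⁻¹ • ∑ i ∈ I, ω i • R i ((ContinuousLinearMap.adjoint (R i)) ew)‖ ^ 2) := by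
  set S : Finset (Fin (n + 1)) → V := fun I => ∑ i ∈ I, ω i • R i ((R i).adjoint ew)
  have hlbar : 0 < lbar := hlmax.trans_le hbar
  have hdecrease : ∀ I, ⟪S I, ew⟫ ≤ lbar * (‖ew‖ ^ 2 - ‖ew - lbar⁻¹ • S I‖ ^ 2) := by
    intro I
    have hstab := norm_sum_sq_le_of_stability hNE2 I fun i => (R i).adjoint ew
    rw [← inner_sum_smul_adjoint_apply_self] at hstab
    have hnonneg : 0 ≤ ⟪S I, ew⟫ := nonneg_of_mul_nonneg_right ((sq_nonneg _).trans hstab) hlmax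
    exact inner_le_mul_sub_norm_sub_inv_smul_sq hlbar
      (hstab.trans (mul_le_mul_of_nonneg_right hbar hnonneg))
  have haverage := inv_choose_mul_sum_powersetCard_sum (univ : Finset (Fin (n + 1)))
    (by simpa using hp2) fun i => ω i * ‖(R i).adjoint ew‖ ^ 2
  rw [card_univ, Fintype.card_fin, Nat.cast_add_one] at haverage
  have hchoose : ((n + 1).choose p : ℝ) ≠ 0 := by exact_mod_cast (Nat.choose_pos hp2).ne'
  calc ((p : ℝ) / (n + 1)) * ⟪S univ, ew⟫
      = ((n + 1).choose p : ℝ)⁻¹ * ∑ I ∈ powersetCard p univ, ⟪S I, ew⟫ := by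
        simp only [S, inner_sum_smul_adjoint_apply_self, haverage]
    _ ≤ ((n + 1).choose p : ℝ)⁻¹ *
          ∑ I ∈ powersetCard p univ, lbar * (‖ew‖ ^ 2 - ‖ew - lbar⁻¹ • S I‖ ^ 2) := by
        gcongr with I
        exact hdecrease I
    _ = _ := by
        simp only [S]
        rw [← mul_sum, sum_sub_distrib, sum_const, card_powersetCard, card_univ,
          Fintype.card_fin, nsmul_eq_mul]
        field_simp

/-- **inequality (EU) in the proof of Theorem 2.** Assume (NE2) with constant
`λ_max`, and let `λ̄ ≥ λ_max`. For `e_w ∈ V` and a uniform random subset `I` of size `p` of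
`{0,…,n}`:
`(p/(n+1)) a(P e_w, e_w) ≤ λ̄ (‖e_w‖² − E(‖e_w − λ̄⁻¹ ∑_{i∈I} ω_i R_i T_i e_w‖²))`. -/
theorem inequality_EU
    {V : Type*} [NormedAddCommGroup V] [InnerProductSpace ℝ V] [CompleteSpace V]
    {n : ℕ} {W : Fin (n + 1) → Type*}
    [∀ i, NormedAddCommGroup (W i)] [∀ i, InnerProductSpace ℝ (W i)]
    [∀ i, CompleteSpace (W i)]
    (R : ∀ i, W i →L[ℝ] V) (ω : Fin (n + 1) → ℝ) (hω : ∀ i, 0 < ω i)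
    (lmax lbar : ℝ) (hlmax : 0 < lmax) (hbar : lmax ≤ lbar)
    (hNE2 : ∀ w : ∀ i, W i,
      ‖∑ i, ω i • R i (w i)‖ ^ 2 ≤ lmax * ∑ i, ω i * ‖w i‖ ^ 2)
    (ew : V) (p : ℕ) (hp1 : 1 ≤ p) (hp2 : p ≤ n + 1) :
    ((p : ℝ) / (n + 1)) *
        ⟪(∑ i, ω i • R i ((ContinuousLinearMap.adjoint (R i)) ew)), ew⟫ ≤
      lbar * (‖ew‖ ^ 2 -
        (((n + 1).choose p : ℝ))⁻¹ *
          ∑ I ∈ Finset.powersetCard p (Finset.univ : Finset (Fin (n + 1))),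
            ‖ew - lbar⁻¹ • ∑ i ∈ I, ω i • R i ((ContinuousLinearMap.adjoint (R i)) ew)‖ ^ 2) :=
  inequality_EU_general R ω lmax lbar hlmax hbar hNE2 ew p hp2
end

section
/- (Parameter choice in the proof of Theorem 2) Let 0 < λ̲ ≤ λ̄ be real numbers, set κ̄ = λ̄/λ̲, let n ≥ 0 and 1 ≤ p ≤ n+1 be integers. Define η = (λ̄ λ̲)^{-1/2}, β = 1 − p/((n+1)√κ̄), and let α ∈ (0,1) be determined by (1−α)/α = (n+1) λ̄ η / p. Then β ∈ [0,1) and the inequality (1−β)/λ̲ − 2η (p/(n+1)) (1 + β(1−α)/(2α)) + λ̄ η² ≤ 0 holds. -/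
/-!
Write `s = √(λ̄λ̲)`, so that `η = 1/s`, `√κ̄ = s/λ̲`, and put `q = p/(n+1) ∈ (0, 1]`.
Then `β = 1 - qλ̲/s`, and `0 < qλ̲/s ≤ 1` because `λ̲ ≤ s`. The defining equation of `α`
reads `(1-α)/α = λ̄/(sq)`, and substituting it turns the left-hand side of the inequality
into a rational expression in `s, λ̲, λ̄, q` that vanishes identically once `s² = λ̄λ̲`:
the parameter choice makes the inequality an equality.
-/

open Real

lemma Real.sqrt_div_eq_sqrt_mul_div (x : ℝ) {y : ℝ} (hy : 0 < y) :
    √(x / y) = √(x * y) / y := by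
  rw [show x / y = x * y / y ^ 2 by field_simp, sqrt_div' _ (sq_nonneg y), sqrt_sq hy.le]

lemma one_sub_mem_Ico_of_mem_Ioc {x : ℝ} (hx : x ∈ Set.Ioc 0 1) : 1 - x ∈ Set.Ico 0 1 :=
  ⟨by linarith [hx.2], by linarith [hx.1]⟩

lemma mul_div_sqrt_mul_mem_Ioc {ll lb q : ℝ} (hll : 0 < ll) (hllb : ll ≤ lb)
    (hq : q ∈ Set.Ioc 0 1) : q * ll / √(lb * ll) ∈ Set.Ioc 0 1 := by
  have hll_le : ll ≤ √(lb * ll) := (le_sqrt hll.le (by nlinarith)).2 (by nlinarith)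
  have hs : 0 < √(lb * ll) := hll.trans_le hll_le
  refine ⟨by have := hq.1; positivity, (div_le_one hs).2 ?_⟩
  calc q * ll ≤ 1 * ll := by gcongr; exact hq.2
    _ ≤ √(lb * ll) := by rwa [one_mul]

lemma parameter_choice_lhs_eq_zero {ll lb s q η α β : ℝ} (hll : ll ≠ 0) (hs : s ≠ 0)
    (hs2 : s ^ 2 = lb * ll) (hq : q ≠ 0) (hη : η = s⁻¹)
    (hαeq : (1 - α) / α = lb / (s * q)) (hβ : β = 1 - q * ll / s) :
    (1 - β) / ll - 2 * η * q * (1 + β * (1 - α) / (2 * α)) + lb * η ^ 2 = 0 := by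
  have hratio : β * (1 - α) / (2 * α) = β * lb / (2 * s * q) := by
    rw [mul_comm 2 α, ← div_div, mul_div_assoc, hαeq]; ring
  rw [hratio, hη, hβ]
  field_simp
  linear_combination (-q * ll) * hs2

theorem accelerated_parameter_choice_general
    (ll lb : ℝ) (hll : 0 < ll) (hllb : ll ≤ lb)
    (n p : ℕ) (hp1 : 1 ≤ p) (hp2 : p ≤ n + 1)
    (η : ℝ) (hη : η = (Real.sqrt (lb * ll))⁻¹)
    (α : ℝ) (hαeq : (1 - α) / α = (n + 1) * lb * η / p)
    (β : ℝ) (hβ : β = 1 - (p : ℝ) / ((n + 1) * Real.sqrt (lb / ll))) :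
    β ∈ Set.Ico (0 : ℝ) 1 ∧
      (1 - β) / ll - 2 * η * ((p : ℝ) / (n + 1)) * (1 + β * (1 - α) / (2 * α)) +
          lb * η ^ 2 ≤ 0 := by
  have hs : 0 < √(lb * ll) := sqrt_pos.2 (by nlinarith)
  have hp : (0 : ℝ) < p := by exact_mod_cast hp1
  have hq : (p : ℝ) / (n + 1) ∈ Set.Ioc 0 1 :=
    ⟨by positivity, (div_le_one (by positivity)).2 (by exact_mod_cast hp2)⟩
  have hβq : β = 1 - p / (n + 1) * ll / √(lb * ll) := by
    rw [hβ, sqrt_div_eq_sqrt_mul_div _ hll]; field_simp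
  have hαq : (1 - α) / α = lb / (√(lb * ll) * (p / (n + 1))) := by
    rw [hαeq, hη]; field_simp
  refine ⟨hβq ▸ one_sub_mem_Ico_of_mem_Ioc (mul_div_sqrt_mul_mem_Ioc hll hllb hq), ?_⟩
  exact (parameter_choice_lhs_eq_zero hll.ne' hs.ne' (sq_sqrt (by nlinarith)) hq.1.ne' hη hαq
    hβq).le

/-- **parameter choice in the proof of Theorem 2.** For real numbers
`0 < λ̲ ≤ λ̄`, `κ̄ = λ̄/λ̲`, integers `n ≥ 0` and `1 ≤ p ≤ n+1`, with
`η = (λ̄λ̲)^{-1/2}`, `β = 1 − p/((n+1)√κ̄)`, and `α ∈ (0,1)` determined by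
`(1−α)/α = (n+1)λ̄η/p`, one has `β ∈ [0,1)` and
`(1−β)/λ̲ − 2η(p/(n+1))(1 + β(1−α)/(2α)) + λ̄η² ≤ 0`. -/
theorem accelerated_parameter_choice
    (ll lb : ℝ) (hll : 0 < ll) (hllb : ll ≤ lb)
    (n p : ℕ) (hp1 : 1 ≤ p) (hp2 : p ≤ n + 1)
    (η : ℝ) (hη : η = (Real.sqrt (lb * ll))⁻¹)
    (α : ℝ) (hα : α ∈ Set.Ioo (0 : ℝ) 1)
    (hαeq : (1 - α) / α = (n + 1) * lb * η / p)
    (β : ℝ) (hβ : β = 1 - (p : ℝ) / ((n + 1) * Real.sqrt (lb / ll))) :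
    β ∈ Set.Ico (0 : ℝ) 1 ∧
      (1 - β) / ll - 2 * η * ((p : ℝ) / (n + 1)) * (1 + β * (1 - α) / (2 * α)) +
          lb * η ^ 2 ≤ 0 :=
  accelerated_parameter_choice_general ll lb hll hllb n p hp1 hp2 η hη α hαeq β hβ
end

section
/- (Theorem 2, one-step bound for the accelerated scheme) Assume the stability bounds (NE1) and (NE2) with 0 < λ_min ≤ λ_max, so that P is bijective, and let 0 < λ̲ ≤ λ_min ≤ λ_max ≤ λ̄ with κ̄ = λ̄/λ̲. Let e_u, e_v ∈ V, let 1 ≤ p ≤ n+1, and let I be a uniform random subset of size p of {0,1,…,n}. Define η = (λ̄ λ̲)^{-1/2}, β = 1 − p/((n+1)√κ̄), α ∈ (0,1) by (1−α)/α = (n+1) λ̄ η / p, and set e_w = α e_v + (1−α) e_u, D = Σ_{i∈I} ω_i R_i T_i e_w, e_u' = e_w − λ̄^{-1} D, e_v' = β e_v + (1−β) e_w − η D. Then E( ‖e_u'‖² + λ̲ a(P^{-1}e_v', e_v') ) ≤ (1 − p/((n+1)√κ̄)) ( ‖e_u‖² + λ̲ a(P^{-1}e_v, e_v) ). -/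
/-!
Fix a sample `I` and put `S_I = ∑_{i ∈ I} ω_i ‖T_i e_w‖² = a(D, e_w)`. By (NE2), `‖D‖² ≤ λ̄ S_I`,
so the step `e_u'` gains at least `λ̄⁻¹ S_I` over `‖e_w‖²`; and `D = ∑_{i ∈ I} ω_i R_i (T_i e_w)`
is a decomposition of energy `S_I`, so `a(P⁻¹D, D) ≤ S_I` and the quadratic term of `e_v'` costs
at most `λ̲ η² S_I = λ̄⁻¹ S_I`. What is left is `‖e_w‖² + λ̲ a(P⁻¹g, g) - 2λ̲η a(P⁻¹g, D)` with
`g = β e_v + (1 - β) e_w`. Averaging over `I` turns `D` into `p/(n+1) · P e_w`, hence the cross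
term into `2(1 - β) a(g, e_w)`. Convexity of `a(P⁻¹·, ·)`, the bound `λ̲ a(P⁻¹v, v) ≤ ‖v‖²`, and
the choice of `α`, which makes `e_u - e_w = (1 - β)(e_w - e_v)`, close the estimate with slack
`β (1 - β)² ‖e_w - e_v‖²`.
-/

open scoped RealInnerProductSpace

open Finset

theorem sum_powersetCard_sum {ι M : Type*} [AddCommMonoid M] (s : Finset ι) {p : ℕ}
    (hp : 1 ≤ p) (g : ι → M) :
    ∑ I ∈ s.powersetCard p, ∑ i ∈ I, g i = (#s - 1).choose (p - 1) • ∑ i ∈ s, g i := by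
  classical
  rw [sum_comm' (t' := s) (s' := fun i => (s.powersetCard p).filter (i ∈ ·))]
  · rw [smul_sum]
    refine sum_congr rfl fun i hi => ?_
    rw [sum_const]
    congr 1
    simpa using card_filter_powersetCard_subset {i} s p (by simpa using hi) (by simpa using hp)
  · intro I i
    simp only [mem_powersetCard, mem_filter]
    exact ⟨fun h => ⟨h, h.1.1 h.2⟩, And.left⟩

theorem choose_inv_mul_sum_powersetCard_sum {ι 𝕜 : Type*} [Field 𝕜] [CharZero 𝕜]
    (s : Finset ι) {p : ℕ} (hp : 1 ≤ p) (hps : p ≤ #s) (g : ι → 𝕜) :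
    ((#s).choose p : 𝕜)⁻¹ * ∑ I ∈ s.powersetCard p, ∑ i ∈ I, g i
      = p / #s * ∑ i ∈ s, g i := by
  obtain ⟨k, rfl⟩ := Nat.exists_eq_add_of_le' hp
  obtain ⟨m, hm⟩ := Nat.exists_eq_add_of_le' (hp.trans hps)
  rw [sum_powersetCard_sum s hp, nsmul_eq_mul, hm, Nat.add_sub_cancel, Nat.add_sub_cancel]
  have hchoose : ((m + 1 : ℕ) : 𝕜) * m.choose k = (m + 1).choose (k + 1) * (k + 1 : ℕ) := by
    exact_mod_cast Nat.add_one_mul_choose_eq m k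
  have hpos : ((m + 1).choose (k + 1) : 𝕜) ≠ 0 := by
    exact_mod_cast (Nat.choose_pos (by omega)).ne'
  field_simp
  linear_combination (∑ i ∈ s, g i) * hchoose

theorem accelerated_coefficients {ll lb N p η β α : ℝ} (hll : 0 < ll) (hllb : ll ≤ lb)
    (hp : 0 < p) (hpN : p ≤ N) (hη : η = (√(lb * ll))⁻¹)
    (hβ : β = 1 - p / (N * √(lb / ll))) (hα : α ≠ 0) (hαeq : (1 - α) / α = N * lb * η / p) :
    ll * η ^ 2 = lb⁻¹ ∧ ll * η * (p / N) = 1 - β ∧ (1 - β) * (1 - α) = α ∧ 0 ≤ β ∧ β ≤ 1 := by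
  set s := √(lb / ll)
  have hN : 0 < N := hp.trans_le hpN
  have hlb : 0 < lb := hll.trans_le hllb
  have hs2 : s ^ 2 = lb / ll := Real.sq_sqrt (by positivity)
  have hs1 : 1 ≤ s := Real.one_le_sqrt.2 ((one_le_div hll).2 hllb)
  have hlbs : ll * s ^ 2 = lb := by rw [hs2]; field_simp
  have hηs : η = (ll * s)⁻¹ := by
    rw [hη, show lb * ll = (ll * s) ^ 2 by rw [mul_pow, hs2]; field_simp,
      Real.sqrt_sq (by positivity)]
  have hθ : p / (N * s) ≤ 1 := (div_le_one (by positivity)).2 (by nlinarith)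
  rw [hηs] at hαeq ⊢
  rw [div_eq_div_iff hα hp.ne'] at hαeq
  refine ⟨?_, ?_, ?_, ?_, ?_⟩
  · rw [← hlbs]
    field_simp
  · rw [hβ]
    field_simp
    ring
  · rw [hβ]
    field_simp
    rw [← hlbs] at hαeq
    field_simp at hαeq
    linear_combination hαeq
  · rw [hβ]
    linarith
  · have : 0 ≤ p / (N * s) := by positivity
    rw [hβ]
    linarith

section InnerProductSpace

variable {ι V : Type*} [NormedAddCommGroup V] [InnerProductSpace ℝ V]

theorem inner_comm_of_rightInverse {P Q : V → V} (hP : ∀ x y, ⟪P x, y⟫ = ⟪x, P y⟫)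
    (hPQ : ∀ v, P (Q v) = v) (x y : V) : ⟪Q x, y⟫ = ⟪x, Q y⟫ := by
  conv_lhs => rw [← hPQ y, ← hP, hPQ]

theorem inner_nonneg_of_rightInverse {P Q : V → V} {c : ℝ} (hc : 0 ≤ c)
    (hP : ∀ x, c * ‖x‖ ^ 2 ≤ ⟪P x, x⟫) (hPQ : ∀ v, P (Q v) = v) (v : V) :
    0 ≤ ⟪Q v, v⟫ := by
  have h := hP (Q v)
  rw [hPQ, real_inner_comm] at h
  exact (by positivity : 0 ≤ c * ‖Q v‖ ^ 2).trans h

theorem mul_inner_le_norm_sq_of_rightInverse {P Q : V → V} {c : ℝ} (hc : 0 ≤ c)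
    (hP : ∀ x, c * ‖x‖ ^ 2 ≤ ⟪P x, x⟫) (hPQ : ∀ v, P (Q v) = v) (v : V) :
    c * ⟪Q v, v⟫ ≤ ‖v‖ ^ 2 := by
  have h := hP (Q v)
  rw [hPQ, real_inner_comm] at h
  have h0 := sq_nonneg ‖c • Q v - v‖
  rw [norm_sub_sq_real, norm_smul, real_inner_smul_left, Real.norm_of_nonneg hc] at h0
  nlinarith [mul_le_mul_of_nonneg_left h hc]

theorem inner_map_convex_comb_le (Q : V →L[ℝ] V) (hQ : ∀ x y, ⟪Q x, y⟫ = ⟪x, Q y⟫)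
    (hQ0 : ∀ v, 0 ≤ ⟪Q v, v⟫) {a b : ℝ} (ha : 0 ≤ a) (hb : 0 ≤ b) (hab : a + b = 1)
    (v w : V) :
    ⟪Q (a • v + b • w), a • v + b • w⟫ ≤ a * ⟪Q v, v⟫ + b * ⟪Q w, w⟫ := by
  have hvw := hQ0 (v - w)
  have hsymm : ⟪Q w, v⟫ = ⟪Q v, w⟫ := by rw [hQ, real_inner_comm]
  simp only [map_add, map_sub, map_smul, inner_add_left, inner_add_right, inner_sub_left,
    inner_sub_right, real_inner_smul_left, real_inner_smul_right, hsymm] at hvw ⊢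
  obtain rfl : b = 1 - a := by linarith
  nlinarith [mul_nonneg (mul_nonneg ha hb) hvw]

theorem norm_sub_inv_smul_sq_le {L S : ℝ} (hL : 0 < L) {w d : V} (hdw : ⟪d, w⟫ = S)
    (hd : ‖d‖ ^ 2 ≤ L * S) : ‖w - L⁻¹ • d‖ ^ 2 ≤ ‖w‖ ^ 2 - L⁻¹ * S := by
  rw [norm_sub_sq_real, norm_smul, real_inner_smul_right, real_inner_comm, hdw, mul_pow,
    Real.norm_of_nonneg (inv_nonneg.2 hL.le)]
  have : L⁻¹ ^ 2 * ‖d‖ ^ 2 ≤ L⁻¹ * S := by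
    calc L⁻¹ ^ 2 * ‖d‖ ^ 2 ≤ L⁻¹ ^ 2 * (L * S) := by gcongr
      _ = L⁻¹ * S := by field_simp
  linarith

theorem inner_map_sub_smul_self (Q : V →L[ℝ] V) (hQ : ∀ x y, ⟪Q x, y⟫ = ⟪x, Q y⟫)
    (g d : V) (η : ℝ) :
    ⟪Q (g - η • d), g - η • d⟫ = ⟪Q g, g⟫ - 2 * η * ⟪Q g, d⟫ + η ^ 2 * ⟪Q d, d⟫ := by
  have hsymm : ⟪Q d, g⟫ = ⟪Q g, d⟫ := by rw [hQ, real_inner_comm]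
  simp only [map_sub, map_smul, inner_sub_left, inner_sub_right, real_inner_smul_left,
    real_inner_smul_right, hsymm]
  ring

/-- With `θ = 1 - β` and `w = α v + (1 - α) u`, `θ (1 - α) = α` means `u - w = θ (w - v)`,
and the difference of the two sides is `β θ² ‖w - v‖²`. -/
theorem norm_sq_sub_inner_extrapolation_le {α β : ℝ} (hβ : 0 ≤ β)
    (hαβ : (1 - β) * (1 - α) = α) {u v w : V} (hw : w = α • v + (1 - α) • u) :
    (2 - β) * ‖w‖ ^ 2 - 2 * (1 - β) * ⟪β • v + (1 - β) • w, w⟫ ≤ β * ‖u‖ ^ 2 := by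
  have hα : 1 - α ≠ 0 := fun h => by simp [h] at hαβ; linarith
  have hu : u = w + (1 - β) • (w - v) := by
    apply smul_right_injective V hα
    linear_combination (norm := module) -hw - hαβ • (w - v)
  have key : β * ‖u‖ ^ 2 - ((2 - β) * ‖w‖ ^ 2 - 2 * (1 - β) * ⟪β • v + (1 - β) • w, w⟫)
      = β * (1 - β) ^ 2 * ‖w - v‖ ^ 2 := by
    rw [hu]
    simp only [← real_inner_self_eq_norm_sq, inner_add_left, inner_add_right, inner_sub_left,
      inner_sub_right, real_inner_smul_left, real_inner_smul_right, real_inner_comm v w]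
    ring
  nlinarith [mul_nonneg (mul_nonneg hβ (sq_nonneg (1 - β))) (sq_nonneg ‖w - v‖)]

theorem choose_inv_mul_sum_powersetCard_sub_inner (s : Finset ι) {p : ℕ}
    (hp : 1 ≤ p) (hps : p ≤ #s) (a b : ℝ) (u : V) (f : ι → V) :
    ((#s).choose p : ℝ)⁻¹ * ∑ I ∈ s.powersetCard p, (a - b * ⟪u, ∑ i ∈ I, f i⟫)
      = a - b * (p / #s) * ⟪u, ∑ i ∈ s, f i⟫ := by
  have hpos : ((#s).choose p : ℝ) ≠ 0 := by exact_mod_cast (Nat.choose_pos hps).ne'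
  simp only [inner_sum, sum_sub_distrib, sum_const, card_powersetCard, ← mul_sum, nsmul_eq_mul,
    mul_sub]
  rw [mul_left_comm _ b, choose_inv_mul_sum_powersetCard_sum s hp hps, inv_mul_cancel_left₀ hpos]
  ring

theorem accelerated_energy_le (Q : V →L[ℝ] V) (hQ : ∀ x y, ⟪Q x, y⟫ = ⟪x, Q y⟫)
    (hQ0 : ∀ v, 0 ≤ ⟪Q v, v⟫) {c : ℝ} (hc : 0 ≤ c) (hQc : ∀ v, c * ⟪Q v, v⟫ ≤ ‖v‖ ^ 2)
    {α β : ℝ} (hβ0 : 0 ≤ β) (hβ1 : β ≤ 1) (hαβ : (1 - β) * (1 - α) = α) {u v w : V}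
    (hw : w = α • v + (1 - α) • u) :
    ‖w‖ ^ 2 + c * ⟪Q (β • v + (1 - β) • w), β • v + (1 - β) • w⟫
        - 2 * (1 - β) * ⟪β • v + (1 - β) • w, w⟫
      ≤ β * (‖u‖ ^ 2 + c * ⟪Q v, v⟫) := by
  have hconv := inner_map_convex_comb_le Q hQ hQ0 hβ0 (sub_nonneg.2 hβ1) (by ring) v w
  have := norm_sq_sub_inner_extrapolation_le hβ0 hαβ hw
  nlinarith [mul_le_mul_of_nonneg_left hconv hc,
    mul_le_mul_of_nonneg_left (hQc w) (sub_nonneg.2 hβ1)]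

end InnerProductSpace

section SchwarzOperator

variable {ι V : Type*} [NormedAddCommGroup V] [InnerProductSpace ℝ V]
  {W : ι → Type*} [∀ i, NormedAddCommGroup (W i)] [∀ i, InnerProductSpace ℝ (W i)]

variable [Fintype ι] in
theorem norm_sum_smul_sq_le_of_forall {R : ∀ i, W i →L[ℝ] V} {ω : ι → ℝ} {c : ℝ}
    (hNE2 : ∀ x : ∀ i, W i, ‖∑ i, ω i • R i (x i)‖ ^ 2 ≤ c * ∑ i, ω i * ‖x i‖ ^ 2)
    (I : Finset ι) (x : ∀ i, W i) :
    ‖∑ i ∈ I, ω i • R i (x i)‖ ^ 2 ≤ c * ∑ i ∈ I, ω i * ‖x i‖ ^ 2 := by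
  classical
  simpa [apply_ite, sum_ite_mem] using hNE2 fun i => if i ∈ I then x i else 0

variable [CompleteSpace V] [∀ i, CompleteSpace (W i)] (R : ∀ i, W i →L[ℝ] V) (ω : ι → ℝ)

theorem inner_sum_smul_eq_sum_inner_adjoint (I : Finset ι) (x : ∀ i, W i) (u : V) :
    ⟪∑ i ∈ I, ω i • R i (x i), u⟫ = ∑ i ∈ I, ω i * ⟪x i, (R i).adjoint u⟫ := by
  simp only [sum_inner, real_inner_smul_left, ContinuousLinearMap.adjoint_inner_right]

variable [Fintype ι]

theorem inner_schwarz_comm (v u : V) :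
    ⟪∑ i, ω i • R i ((R i).adjoint v), u⟫ = ⟪v, ∑ i, ω i • R i ((R i).adjoint u)⟫ := by
  rw [inner_sum_smul_eq_sum_inner_adjoint, real_inner_comm, inner_sum_smul_eq_sum_inner_adjoint]
  simp only [real_inner_comm]

variable {R ω}

/-- `⟪P⁻¹ v, v⟫` is the decomposition norm `|||v|||²`, attained at `x i = (R i).adjoint (P⁻¹ v)`;
expand `0 ≤ ∑ ω i ‖x i - (R i).adjoint (P⁻¹ v)‖²`. -/
theorem inner_le_sum_norm_sq_of_rightInverse (hω : ∀ i, 0 ≤ ω i) {Q : V → V}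
    (hPQ : ∀ v, ∑ i, ω i • R i ((R i).adjoint (Q v)) = v) (I : Finset ι) (x : ∀ i, W i) :
    ⟪Q (∑ i ∈ I, ω i • R i (x i)), ∑ i ∈ I, ω i • R i (x i)⟫ ≤ ∑ i ∈ I, ω i * ‖x i‖ ^ 2 := by
  set v := ∑ i ∈ I, ω i • R i (x i)
  set y : ∀ i, W i := fun i => (R i).adjoint (Q v)
  have hx : ⟪Q v, v⟫ = ∑ i ∈ I, ω i * ⟪x i, y i⟫ := by
    rw [real_inner_comm, inner_sum_smul_eq_sum_inner_adjoint]
  have hy : ∑ i ∈ I, ω i * ‖y i‖ ^ 2 ≤ ⟪Q v, v⟫ := by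
    calc ∑ i ∈ I, ω i * ‖y i‖ ^ 2 ≤ ∑ i, ω i * ‖y i‖ ^ 2 :=
          sum_le_sum_of_subset_of_nonneg (subset_univ I) fun i _ _ => by
            have := hω i; positivity
      _ = ⟪∑ i, ω i • R i (y i), Q v⟫ := by
          simp only [inner_sum_smul_eq_sum_inner_adjoint, y, real_inner_self_eq_norm_sq]
      _ = ⟪Q v, v⟫ := by rw [hPQ, real_inner_comm]
  have h0 : 0 ≤ ∑ i ∈ I, ω i * ‖x i - y i‖ ^ 2 :=
    sum_nonneg fun i _ => mul_nonneg (hω i) (sq_nonneg _)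
  simp only [norm_sub_sq_real, mul_add, mul_sub, sum_add_distrib, sum_sub_distrib] at h0
  simp only [mul_left_comm _ (2 : ℝ), ← mul_sum] at h0
  linarith

theorem schwarz_sample_bound (hω : ∀ i, 0 ≤ ω i) {lmax L c η : ℝ}
    (hNE2 : ∀ x : ∀ i, W i, ‖∑ i, ω i • R i (x i)‖ ^ 2 ≤ lmax * ∑ i, ω i * ‖x i‖ ^ 2)
    (hL : 0 < L) (hlmaxL : lmax ≤ L) (hcη : c * η ^ 2 = L⁻¹)
    (Q : V →L[ℝ] V) (hPQ : ∀ v, ∑ i, ω i • R i ((R i).adjoint (Q v)) = v)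
    (I : Finset ι) (w g : V) :
    ‖w - L⁻¹ • ∑ i ∈ I, ω i • R i ((R i).adjoint w)‖ ^ 2
        + c * ⟪Q (g - η • ∑ i ∈ I, ω i • R i ((R i).adjoint w)),
            g - η • ∑ i ∈ I, ω i • R i ((R i).adjoint w)⟫
      ≤ ‖w‖ ^ 2 + c * ⟪Q g, g⟫
        - 2 * c * η * ⟪Q g, ∑ i ∈ I, ω i • R i ((R i).adjoint w)⟫ := by
  set D := ∑ i ∈ I, ω i • R i ((R i).adjoint w)
  set S := ∑ i ∈ I, ω i * ‖(R i).adjoint w‖ ^ 2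
  have hS : 0 ≤ S := sum_nonneg fun i _ => mul_nonneg (hω i) (sq_nonneg _)
  have hDw : ⟪D, w⟫ = S := by
    simp only [D, S, inner_sum_smul_eq_sum_inner_adjoint, real_inner_self_eq_norm_sq]
  have hD : ‖D‖ ^ 2 ≤ L * S := (norm_sum_smul_sq_le_of_forall hNE2 I _).trans (by gcongr)
  have hQD : c * η ^ 2 * ⟪Q D, D⟫ ≤ L⁻¹ * S := by
    rw [hcη]
    exact mul_le_mul_of_nonneg_left (inner_le_sum_norm_sq_of_rightInverse hω hPQ I _)
      (by positivity)
  have hQ := inner_comm_of_rightInverse (P := fun v => ∑ i, ω i • R i ((R i).adjoint v))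
    (inner_schwarz_comm R ω) hPQ
  rw [inner_map_sub_smul_self Q hQ]
  linarith [norm_sub_inv_smul_sq_le hL hDw hD]

end SchwarzOperator

theorem accelerated_one_step_bound_general
    {V : Type*} [NormedAddCommGroup V] [InnerProductSpace ℝ V] [CompleteSpace V]
    {n : ℕ} {W : Fin (n + 1) → Type*}
    [∀ i, NormedAddCommGroup (W i)] [∀ i, InnerProductSpace ℝ (W i)]
    [∀ i, CompleteSpace (W i)]
    (R : ∀ i, W i →L[ℝ] V) (ω : Fin (n + 1) → ℝ) (hω : ∀ i, 0 < ω i)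
    (lmin lmax : ℝ) (hminmax : lmin ≤ lmax)
    (hNE1 : ∀ v : V,
      lmin * ‖v‖ ^ 2 ≤ ⟪(∑ i, ω i • R i ((ContinuousLinearMap.adjoint (R i)) v)), v⟫)
    (hNE2 : ∀ w : ∀ i, W i,
      ‖∑ i, ω i • R i (w i)‖ ^ 2 ≤ lmax * ∑ i, ω i * ‖w i‖ ^ 2)
    (Q : V →L[ℝ] V)
    (hPQ : ∀ v : V, (∑ i, ω i • R i ((ContinuousLinearMap.adjoint (R i)) (Q v))) = v)
    (ll lb : ℝ) (hll : 0 < ll) (hlllmin : ll ≤ lmin) (hlmaxlb : lmax ≤ lb)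
    (eu ev : V) (p : ℕ) (hp1 : 1 ≤ p) (hp2 : p ≤ n + 1)
    (η : ℝ) (hη : η = (Real.sqrt (lb * ll))⁻¹)
    (β : ℝ) (hβ : β = 1 - (p : ℝ) / ((n + 1) * Real.sqrt (lb / ll)))
    (α : ℝ) (hα : α ∈ Set.Ioo (0 : ℝ) 1)
    (hαeq : (1 - α) / α = (n + 1) * lb * η / p)
    (ew : V) (hew : ew = α • ev + (1 - α) • eu)
    (D : Finset (Fin (n + 1)) → V)
    (hD : ∀ I, D I = ∑ i ∈ I, ω i • R i ((ContinuousLinearMap.adjoint (R i)) ew))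
    (eu' ev' : Finset (Fin (n + 1)) → V)
    (heu' : ∀ I, eu' I = ew - lb⁻¹ • D I)
    (hev' : ∀ I, ev' I = β • ev + (1 - β) • ew - η • D I) :
    (((n + 1).choose p : ℝ))⁻¹ *
        ∑ I ∈ Finset.powersetCard p (Finset.univ : Finset (Fin (n + 1))),
          (‖eu' I‖ ^ 2 + ll * ⟪Q (ev' I), ev' I⟫) ≤
      (1 - (p : ℝ) / ((n + 1) * Real.sqrt (lb / ll))) *
        (‖eu‖ ^ 2 + ll * ⟪Q ev, ev⟫) := by
  have hllb : ll ≤ lb := hlllmin.trans (hminmax.trans hlmaxlb)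
  have hll_le : ∀ v, ll * ‖v‖ ^ 2 ≤ ⟪∑ i, ω i • R i ((R i).adjoint v), v⟫ := fun v =>
    (mul_le_mul_of_nonneg_right hlllmin (sq_nonneg _)).trans (hNE1 v)
  obtain ⟨hη2, hητ, hαβ, hβ0, hβ1⟩ := accelerated_coefficients hll hllb
    (by exact_mod_cast hp1) (by exact_mod_cast hp2) hη hβ hα.1.ne' hαeq
  have hQ := inner_comm_of_rightInverse (P := fun v => ∑ i, ω i • R i ((R i).adjoint v))
    (inner_schwarz_comm R ω) hPQ
  set g := β • ev + (1 - β) • ew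
  have hmean := choose_inv_mul_sum_powersetCard_sub_inner univ hp1 (by simpa using hp2)
    (‖ew‖ ^ 2 + ll * ⟪Q g, g⟫) (2 * ll * η) (Q g) fun i => ω i • R i ((R i).adjoint ew)
  rw [card_fin, ← inner_schwarz_comm, hPQ] at hmean
  push_cast at hmean
  have hθ : 2 * ll * η * (p / (n + 1)) = 2 * (1 - β) := by rw [← hητ]; ring
  simp only [heu', hev', hD]
  refine (mul_le_mul_of_nonneg_left (sum_le_sum fun I _ => schwarz_sample_bound
    (fun i => (hω i).le) hNE2 (hll.trans_le hllb) hlmaxlb hη2 Q hPQ I ew _)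
    (by positivity)).trans ?_
  rw [hmean, hθ, ← hβ]
  exact accelerated_energy_le Q hQ (inner_nonneg_of_rightInverse hll.le hll_le hPQ) hll.le
    (mul_inner_le_norm_sq_of_rightInverse hll.le hll_le hPQ) hβ0 hβ1 hαβ hew

/-- **Theorem 2, one-step bound for the accelerated scheme.** Assume (NE1),
(NE2) with `0 < λ_min ≤ λ_max` (so `P` is bijective, with inverse `Q = P⁻¹`), and let
`0 < λ̲ ≤ λ_min ≤ λ_max ≤ λ̄`, `κ̄ = λ̄/λ̲`. With `η = (λ̄λ̲)^{-1/2}`,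
`β = 1 − p/((n+1)√κ̄)`, `α ∈ (0,1)` with `(1−α)/α = (n+1)λ̄η/p`,
`e_w = α e_v + (1−α) e_u`, `D = ∑_{i∈I} ω_i R_i T_i e_w`, `e_u' = e_w − λ̄⁻¹ D`,
`e_v' = β e_v + (1−β) e_w − η D`, and `I` a uniform random subset of size `p` of `{0,…,n}`:
`E(‖e_u'‖² + λ̲ a(P⁻¹e_v', e_v')) ≤ (1 − p/((n+1)√κ̄)) (‖e_u‖² + λ̲ a(P⁻¹e_v, e_v))`. -/
theorem accelerated_one_step_bound
    {V : Type*} [NormedAddCommGroup V] [InnerProductSpace ℝ V] [CompleteSpace V]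
    {n : ℕ} {W : Fin (n + 1) → Type*}
    [∀ i, NormedAddCommGroup (W i)] [∀ i, InnerProductSpace ℝ (W i)]
    [∀ i, CompleteSpace (W i)]
    (R : ∀ i, W i →L[ℝ] V) (ω : Fin (n + 1) → ℝ) (hω : ∀ i, 0 < ω i)
    (lmin lmax : ℝ) (hlmin : 0 < lmin) (hminmax : lmin ≤ lmax)
    (hNE1 : ∀ v : V,
      lmin * ‖v‖ ^ 2 ≤ ⟪(∑ i, ω i • R i ((ContinuousLinearMap.adjoint (R i)) v)), v⟫)
    (hNE2 : ∀ w : ∀ i, W i,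
      ‖∑ i, ω i • R i (w i)‖ ^ 2 ≤ lmax * ∑ i, ω i * ‖w i‖ ^ 2)
    (Q : V →L[ℝ] V)
    (hPQ : ∀ v : V, (∑ i, ω i • R i ((ContinuousLinearMap.adjoint (R i)) (Q v))) = v)
    (hQP : ∀ v : V, Q (∑ i, ω i • R i ((ContinuousLinearMap.adjoint (R i)) v)) = v)
    (ll lb : ℝ) (hll : 0 < ll) (hlllmin : ll ≤ lmin) (hlmaxlb : lmax ≤ lb)
    (eu ev : V) (p : ℕ) (hp1 : 1 ≤ p) (hp2 : p ≤ n + 1)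
    (η : ℝ) (hη : η = (Real.sqrt (lb * ll))⁻¹)
    (β : ℝ) (hβ : β = 1 - (p : ℝ) / ((n + 1) * Real.sqrt (lb / ll)))
    (α : ℝ) (hα : α ∈ Set.Ioo (0 : ℝ) 1)
    (hαeq : (1 - α) / α = (n + 1) * lb * η / p)
    (ew : V) (hew : ew = α • ev + (1 - α) • eu)
    (D : Finset (Fin (n + 1)) → V)
    (hD : ∀ I, D I = ∑ i ∈ I, ω i • R i ((ContinuousLinearMap.adjoint (R i)) ew))
    (eu' ev' : Finset (Fin (n + 1)) → V)
    (heu' : ∀ I, eu' I = ew - lb⁻¹ • D I)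
    (hev' : ∀ I, ev' I = β • ev + (1 - β) • ew - η • D I) :
    (((n + 1).choose p : ℝ))⁻¹ *
        ∑ I ∈ Finset.powersetCard p (Finset.univ : Finset (Fin (n + 1))),
          (‖eu' I‖ ^ 2 + ll * ⟪Q (ev' I), ev' I⟫) ≤
      (1 - (p : ℝ) / ((n + 1) * Real.sqrt (lb / ll))) *
        (‖eu‖ ^ 2 + ll * ⟪Q ev, ev⟫) :=
  accelerated_one_step_bound_general R ω hω lmin lmax hminmax hNE1 hNE2 Q hPQ ll lb hll hlllmin
    hlmaxlb eu ev p hp1 hp2 η hη β hβ α hα hαeq ew hew D hD eu' ev' heu' hev'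
end

section
/- (Corollary 1, partition version of the one-step bound) Assume the stability bounds (NE1) and (NE2) with constants 0 < λ_min ≤ λ_max, and set κ = λ_max/λ_min. Let I^1, …, I^S be disjoint nonempty sets forming a partition of {0,1,…,n}, and for each s = 1,…,S let I^s_m be a uniform random subset of I^s of size p^s with 1 ≤ p^s ≤ |I^s|, the choices for different s being independent; set I = I^1_m ∪ … ∪ I^S_m. Define r̄ = max_{s} p^s/|I^s| and r̲ = min_{s} p^s/|I^s|, and take ξ = r̲/(r̄ λ_max). Then for every e ∈ V: E(‖e − ξ Σ_{i∈I} ω_i R_i T_i e‖²) ≤ (1 − r̲²/(r̄ κ)) ‖e‖². -/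
open scoped RealInnerProductSpace


-- auxiliary: number of p-subsets of A containing i
theorem card_powersetCard_filter_mem {α : Type*} [DecidableEq α] (A : Finset α) (i : α)
    (hi : i ∈ A) (p : ℕ) (hp : 1 ≤ p) :
    ((Finset.powersetCard p A).filter (fun B => i ∈ B)).card
      = (A.card - 1).choose (p - 1) := by
  have : ((Finset.powersetCard p A).filter (fun B => i ∈ B)).card
      = (Finset.powersetCard (p - 1) (A.erase i)).card := by
    refine Finset.card_bij' (fun B _ => B.erase i) (fun B _ => insert i B) ?_ ?_ ?_ ?_
    · intro B hB
      simp only [Finset.mem_filter, Finset.mem_powersetCard] at hB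
      obtain ⟨⟨hsub, hcard⟩, hmem⟩ := hB
      rw [Finset.mem_powersetCard]
      constructor
      · intro x hx
        simp only [Finset.mem_erase] at hx ⊢
        exact ⟨hx.1, hsub hx.2⟩
      · rw [Finset.card_erase_of_mem hmem, hcard]
    · intro B hB
      rw [Finset.mem_powersetCard] at hB
      obtain ⟨hsub, hcard⟩ := hB
      have hiB : i ∉ B := fun h => (Finset.mem_erase.mp (hsub h)).1 rfl
      simp only [Finset.mem_filter, Finset.mem_powersetCard]
      refine ⟨⟨?_, ?_⟩, Finset.mem_insert_self i B⟩
      · intro x hx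
        rcases Finset.mem_insert.mp hx with h | h
        · exact h ▸ hi
        · exact Finset.mem_of_mem_erase (hsub h)
      · rw [Finset.card_insert_of_notMem hiB, hcard]
        omega
    · intro B hB
      simp only [Finset.mem_filter] at hB
      exact Finset.insert_erase hB.2
    · intro B hB
      rw [Finset.mem_powersetCard] at hB
      have hiB : i ∉ B := fun h => (Finset.mem_erase.mp (hB.1 h)).1 rfl
      exact Finset.erase_insert hiB
  rw [this, Finset.card_powersetCard, Finset.card_erase_of_mem hi]

set_option maxHeartbeats 1000000 in
/-- **Corollary 1, partition version of the one-step bound.** Assume (NE1),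
(NE2) with `0 < λ_min ≤ λ_max`, `κ = λ_max/λ_min`. Let `I¹,…,I^S` be disjoint nonempty sets
partitioning `{0,…,n}`, for each `s` let `Iˢₘ` be an independent uniform random subset of
`Iˢ` of size `pˢ` (`1 ≤ pˢ ≤ |Iˢ|`), and set `I = I¹ₘ ∪ … ∪ I^Sₘ`. With
`r̄ = maxₛ pˢ/|Iˢ|`, `r̲ = minₛ pˢ/|Iˢ|` and `ξ = r̲/(r̄ λ_max)`:
`E(‖e − ξ ∑_{i∈I} ω_i R_i T_i e‖²) ≤ (1 − r̲²/(r̄κ)) ‖e‖²`. -/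
theorem partition_one_step_bound
    {V : Type*} [NormedAddCommGroup V] [InnerProductSpace ℝ V] [CompleteSpace V]
    {n : ℕ} {W : Fin (n + 1) → Type*}
    [∀ i, NormedAddCommGroup (W i)] [∀ i, InnerProductSpace ℝ (W i)]
    [∀ i, CompleteSpace (W i)]
    (R : ∀ i, W i →L[ℝ] V) (ω : Fin (n + 1) → ℝ) (hω : ∀ i, 0 < ω i)
    (lmin lmax : ℝ) (hlmin : 0 < lmin) (hminmax : lmin ≤ lmax)
    (hNE1 : ∀ v : V,
      lmin * ‖v‖ ^ 2 ≤ ⟪(∑ i, ω i • R i ((ContinuousLinearMap.adjoint (R i)) v)), v⟫)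
    (hNE2 : ∀ w : ∀ i, W i,
      ‖∑ i, ω i • R i (w i)‖ ^ 2 ≤ lmax * ∑ i, ω i * ‖w i‖ ^ 2)
    (S : ℕ) (A : Fin S → Finset (Fin (n + 1)))
    (hA0 : ∀ s, (A s).Nonempty)
    (hdisj : ∀ s t, s ≠ t → Disjoint (A s) (A t))
    (hcover : Finset.univ.biUnion A = (Finset.univ : Finset (Fin (n + 1))))
    (ps : Fin S → ℕ) (hps : ∀ s, 1 ≤ ps s ∧ ps s ≤ (A s).card)
    (rbar rlow : ℝ)
    (hrbar_ub : ∀ s, (ps s : ℝ) / (A s).card ≤ rbar)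
    (hrbar_mem : ∃ s, rbar = (ps s : ℝ) / (A s).card)
    (hrlow_lb : ∀ s, rlow ≤ (ps s : ℝ) / (A s).card)
    (hrlow_mem : ∃ s, rlow = (ps s : ℝ) / (A s).card)
    (e : V) :
    (∏ s, ((A s).card.choose (ps s) : ℝ))⁻¹ *
        ∑ J ∈ Fintype.piFinset (fun s => Finset.powersetCard (ps s) (A s)),
          ‖e - (rlow / (rbar * lmax)) •
              ∑ i ∈ Finset.univ.biUnion J,
                ω i • R i ((ContinuousLinearMap.adjoint (R i)) e)‖ ^ 2 ≤
      (1 - rlow ^ 2 / (rbar * (lmax / lmin))) * ‖e‖ ^ 2 := by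
  classical
  set ξ : ℝ := rlow / (rbar * lmax) with hxi
  set g : Fin (n + 1) → ℝ := fun i => ω i * ‖(ContinuousLinearMap.adjoint (R i)) e‖ ^ 2 with hg
  have hg0 : ∀ i, 0 ≤ g i := fun i => mul_nonneg (hω i).le (by positivity)
  have hlmax : 0 < lmax := hlmin.trans_le hminmax
  obtain ⟨s1, hs1⟩ := hrlow_mem
  have hcard1 : 0 < ((A s1).card : ℝ) := by exact_mod_cast (hA0 s1).card_pos
  have hrlow_pos : 0 < rlow := by
    rw [hs1]
    apply div_pos _ hcard1
    exact_mod_cast (hps s1).1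
  have hrle : rlow ≤ rbar := hs1 ▸ hrbar_ub s1
  have hrbar_pos : 0 < rbar := lt_of_lt_of_le hrlow_pos hrle
  have hxi_pos : 0 < ξ := div_pos hrlow_pos (mul_pos hrbar_pos hlmax)
  have hxilmax : ξ * lmax ≤ 1 := by
    rw [hxi, div_mul_eq_mul_div, div_le_one (by positivity)]
    calc rlow * lmax ≤ rbar * lmax := by nlinarith
      _ = rbar * lmax := rfl
  set N : ℝ := ∏ s, ((A s).card.choose (ps s) : ℝ) with hNdef
  have hN : 0 < N := Finset.prod_pos fun s _ => by exact_mod_cast Nat.choose_pos (hps s).2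
  set F := Fintype.piFinset (fun s => Finset.powersetCard (ps s) (A s)) with hF
  -- inner product identity
  have hinner : ∀ i, ⟪e, R i ((ContinuousLinearMap.adjoint (R i)) e)⟫
      = ‖(ContinuousLinearMap.adjoint (R i)) e‖ ^ 2 := by
    intro i
    rw [← ContinuousLinearMap.adjoint_inner_left, real_inner_self_eq_norm_sq]
  -- NE1 rewritten
  have hD : lmin * ‖e‖ ^ 2 ≤ ∑ i, g i := by
    have h := hNE1 e
    have heq : ⟪(∑ i, ω i • R i ((ContinuousLinearMap.adjoint (R i)) e)), e⟫ = ∑ i, g i := by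
      rw [sum_inner]
      refine Finset.sum_congr rfl fun i _ => ?_
      rw [real_inner_smul_left, real_inner_comm, hinner i]
    linarith [heq ▸ h]
  -- per-J bound
  have hJb : ∀ J ∈ F,
      ‖e - ξ • ∑ i ∈ Finset.univ.biUnion J, ω i • R i ((ContinuousLinearMap.adjoint (R i)) e)‖ ^ 2
        ≤ ‖e‖ ^ 2 - (2 * ξ - ξ ^ 2 * lmax) * ∑ i ∈ Finset.univ.biUnion J, g i := by
    intro J _
    set I := Finset.univ.biUnion J with hI
    set x := ∑ i ∈ I, ω i • R i ((ContinuousLinearMap.adjoint (R i)) e) with hx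
    have hxinner : ⟪e, x⟫ = ∑ i ∈ I, g i := by
      rw [hx, inner_sum]
      refine Finset.sum_congr rfl fun i _ => ?_
      rw [real_inner_smul_right, hinner i]
    have hxn : ‖x‖ ^ 2 ≤ lmax * ∑ i ∈ I, g i := by
      have h := hNE2 (fun i => if i ∈ I then (ContinuousLinearMap.adjoint (R i)) e else 0)
      have h1 : (∑ i, ω i • R i (if i ∈ I then (ContinuousLinearMap.adjoint (R i)) e else 0)) = x := by
        rw [hx]
        rw [show (∑ i ∈ I, ω i • R i ((ContinuousLinearMap.adjoint (R i)) e))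
            = ∑ i ∈ Finset.univ ∩ I, ω i • R i ((ContinuousLinearMap.adjoint (R i)) e) by
          rw [Finset.univ_inter]]
        rw [← Finset.sum_ite_mem]
        refine Finset.sum_congr rfl fun i _ => ?_
        split_ifs with hi
        · rfl
        · simp
      have h2 : (∑ i, ω i * ‖(if i ∈ I then (ContinuousLinearMap.adjoint (R i)) e else 0 : W i)‖ ^ 2)
          = ∑ i ∈ I, g i := by
        rw [show (∑ i ∈ I, g i) = ∑ i ∈ Finset.univ ∩ I, g i by rw [Finset.univ_inter]]
        rw [← Finset.sum_ite_mem]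
        refine Finset.sum_congr rfl fun i _ => ?_
        split_ifs with hi
        · rfl
        · simp
      rw [h1, h2] at h
      exact h
    have expand : ‖e - ξ • x‖ ^ 2 = ‖e‖ ^ 2 - 2 * ξ * ⟪e, x⟫ + ξ ^ 2 * ‖x‖ ^ 2 := by
      rw [norm_sub_sq_real, real_inner_smul_right, norm_smul, mul_pow, Real.norm_eq_abs, sq_abs]
      ring
    rw [expand, hxinner]
    have hs : 0 ≤ ∑ i ∈ I, g i := Finset.sum_nonneg fun i _ => hg0 i
    nlinarith [sq_nonneg ξ, hxn]
  -- counting: per-element lower bound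
  have hcnt : ∀ i : Fin (n + 1),
      N * rlow ≤ ∑ J ∈ F, (if i ∈ Finset.univ.biUnion J then (1 : ℝ) else 0) := by
    intro i
    have hiU : i ∈ Finset.univ.biUnion A := hcover ▸ Finset.mem_univ i
    obtain ⟨s, -, his⟩ := Finset.mem_biUnion.mp hiU
    have hmem_iff : ∀ J ∈ F, (i ∈ Finset.univ.biUnion J ↔ i ∈ J s) := by
      intro J hJ
      constructor
      · intro hiJ
        obtain ⟨t, -, hit⟩ := Finset.mem_biUnion.mp hiJ
        have hJt : J t ⊆ A t :=
          (Finset.mem_powersetCard.mp (Fintype.mem_piFinset.mp hJ t)).1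
        by_cases hts : t = s
        · exact hts ▸ hit
        · exact absurd his (Finset.disjoint_left.mp (hdisj t s hts) (hJt hit))
      · intro hiJ
        exact Finset.mem_biUnion.mpr ⟨s, Finset.mem_univ s, hiJ⟩
    have hcount_eq : (∑ J ∈ F, (if i ∈ Finset.univ.biUnion J then (1 : ℝ) else 0))
        = (((A s).card - 1).choose (ps s - 1) : ℝ) *
            ∏ t ∈ Finset.univ.erase s, ((A t).card.choose (ps t) : ℝ) := by
      calc (∑ J ∈ F, (if i ∈ Finset.univ.biUnion J then (1 : ℝ) else 0))
          = ∑ J ∈ F, ∏ t, (if t = s then (if i ∈ J t then (1 : ℝ) else 0) else 1) := by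
            refine Finset.sum_congr rfl fun J hJ => ?_
            rw [Finset.prod_eq_single s (fun t _ ht => if_neg ht) (by simp),
              if_pos (rfl : s = s)]
            exact if_congr (hmem_iff J hJ) rfl rfl
        _ = ∏ t, ∑ B ∈ Finset.powersetCard (ps t) (A t),
              (if t = s then (if i ∈ B then (1 : ℝ) else 0) else 1) := by
            rw [Finset.prod_univ_sum]
        _ = (((A s).card - 1).choose (ps s - 1) : ℝ) *
              ∏ t ∈ Finset.univ.erase s, ((A t).card.choose (ps t) : ℝ) := by
            rw [← Finset.mul_prod_erase Finset.univ _ (Finset.mem_univ s)]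
            congr 1
            · simp only [eq_self_iff_true, if_true]
              rw [Finset.sum_boole, card_powersetCard_filter_mem (A s) i his (ps s) (hps s).1]
            · refine Finset.prod_congr rfl fun t ht => ?_
              rw [Finset.sum_congr rfl fun B _ => if_neg (Finset.mem_erase.mp ht).1]
              rw [Finset.sum_const, Finset.card_powersetCard]
              simp
    rw [hcount_eq]
    have hNsplit : N = ((A s).card.choose (ps s) : ℝ) *
        ∏ t ∈ Finset.univ.erase s, ((A t).card.choose (ps t) : ℝ) := by
      rw [hNdef, ← Finset.mul_prod_erase Finset.univ _ (Finset.mem_univ s)]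
    have hchoose : ((A s).card : ℝ) * (((A s).card - 1).choose (ps s - 1) : ℝ)
        = ((A s).card.choose (ps s) : ℝ) * (ps s : ℝ) := by
      have h1 : 1 ≤ ps s := (hps s).1
      have h2 : 1 ≤ (A s).card := le_trans h1 (hps s).2
      have key := Nat.add_one_mul_choose_eq ((A s).card - 1) (ps s - 1)
      have h3 : (A s).card - 1 + 1 = (A s).card := by omega
      have h4 : ps s - 1 + 1 = ps s := by omega
      rw [h3, h4] at key
      exact_mod_cast key
    have hrest : (0 : ℝ) ≤ ∏ t ∈ Finset.univ.erase s, ((A t).card.choose (ps t) : ℝ) :=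
      Finset.prod_nonneg fun t _ => by positivity
    have hcards : (0 : ℝ) < ((A s).card : ℝ) := by exact_mod_cast (hA0 s).card_pos
    have hC' : (((A s).card - 1).choose (ps s - 1) : ℝ)
        = ((A s).card.choose (ps s) : ℝ) * (ps s : ℝ) / ((A s).card : ℝ) := by
      rw [eq_div_iff hcards.ne']
      linarith [hchoose]
    have hkey : N * ((ps s : ℝ) / (A s).card)
        = (((A s).card - 1).choose (ps s - 1) : ℝ) *
            ∏ t ∈ Finset.univ.erase s, ((A t).card.choose (ps t) : ℝ) := by
      rw [hNsplit, hC']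
      field_simp
    calc N * rlow ≤ N * ((ps s : ℝ) / (A s).card) :=
          mul_le_mul_of_nonneg_left (hrlow_lb s) hN.le
      _ = _ := hkey
  -- total of the cross terms
  set M : ℝ := ∑ J ∈ F, ∑ i ∈ Finset.univ.biUnion J, g i with hMdef
  have hMswap : M = ∑ i, (∑ J ∈ F, (if i ∈ Finset.univ.biUnion J then (1 : ℝ) else 0)) * g i := by
    rw [hMdef]
    rw [show (∑ J ∈ F, ∑ i ∈ Finset.univ.biUnion J, g i)
        = ∑ J ∈ F, ∑ i, (if i ∈ Finset.univ.biUnion J then (1 : ℝ) else 0) * g i by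
      refine Finset.sum_congr rfl fun J _ => ?_
      rw [show (∑ i ∈ Finset.univ.biUnion J, g i)
          = ∑ i ∈ Finset.univ ∩ Finset.univ.biUnion J, g i by rw [Finset.univ_inter]]
      rw [← Finset.sum_ite_mem]
      refine Finset.sum_congr rfl fun i _ => ?_
      split_ifs <;> simp]
    rw [Finset.sum_comm]
    refine Finset.sum_congr rfl fun i _ => ?_
    rw [Finset.sum_mul]
  have hM : N * rlow * ∑ i, g i ≤ M := by
    rw [hMswap, Finset.mul_sum]
    exact Finset.sum_le_sum fun i _ => mul_le_mul_of_nonneg_right (hcnt i) (hg0 i)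
  have hM0 : 0 ≤ M := le_trans (by positivity) (le_trans (mul_le_mul_of_nonneg_left hD (by positivity)) hM)
  -- card of F
  have hFcard : (F.card : ℝ) = N := by
    rw [hF, Fintype.card_piFinset]
    push_cast
    exact Finset.prod_congr rfl fun s _ => by rw [Finset.card_powersetCard]
  -- sum the per-J bounds
  have htot : (∑ J ∈ F,
      ‖e - ξ • ∑ i ∈ Finset.univ.biUnion J, ω i • R i ((ContinuousLinearMap.adjoint (R i)) e)‖ ^ 2)
      ≤ N * ‖e‖ ^ 2 - (2 * ξ - ξ ^ 2 * lmax) * M := by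
    calc (∑ J ∈ F, ‖e - ξ • ∑ i ∈ Finset.univ.biUnion J,
            ω i • R i ((ContinuousLinearMap.adjoint (R i)) e)‖ ^ 2)
        ≤ ∑ J ∈ F, (‖e‖ ^ 2 - (2 * ξ - ξ ^ 2 * lmax) * ∑ i ∈ Finset.univ.biUnion J, g i) :=
          Finset.sum_le_sum hJb
      _ = N * ‖e‖ ^ 2 - (2 * ξ - ξ ^ 2 * lmax) * M := by
          rw [Finset.sum_sub_distrib, Finset.sum_const, ← Finset.mul_sum, ← hMdef]
          rw [nsmul_eq_mul, hFcard]
  -- final numeric assembly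
  have hcxi : ξ ≤ 2 * ξ - ξ ^ 2 * lmax := by nlinarith
  have hMlb : N * rlow * (lmin * ‖e‖ ^ 2) ≤ M :=
    le_trans (mul_le_mul_of_nonneg_left hD (by positivity)) hM
  have hfinal : N * ‖e‖ ^ 2 - (2 * ξ - ξ ^ 2 * lmax) * M
      ≤ N * ((1 - rlow ^ 2 / (rbar * (lmax / lmin))) * ‖e‖ ^ 2) := by
    have hxirl : ξ * (rlow * lmin) = rlow ^ 2 / (rbar * (lmax / lmin)) := by
      rw [hxi]
      field_simp
    have h1 : ξ * M ≤ (2 * ξ - ξ ^ 2 * lmax) * M := mul_le_mul_of_nonneg_right hcxi hM0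
    have h2 : ξ * (N * rlow * (lmin * ‖e‖ ^ 2)) ≤ ξ * M :=
      mul_le_mul_of_nonneg_left hMlb hxi_pos.le
    rw [← hxirl]
    nlinarith [h1, h2]
  calc N⁻¹ * (∑ J ∈ F,
        ‖e - ξ • ∑ i ∈ Finset.univ.biUnion J,
          ω i • R i ((ContinuousLinearMap.adjoint (R i)) e)‖ ^ 2)
      ≤ N⁻¹ * (N * ((1 - rlow ^ 2 / (rbar * (lmax / lmin))) * ‖e‖ ^ 2)) := by
        apply mul_le_mul_of_nonneg_left (le_trans htot hfinal) (by positivity)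
    _ = (1 - rlow ^ 2 / (rbar * (lmax / lmin))) * ‖e‖ ^ 2 := by
        rw [← mul_assoc, inv_mul_cancel₀ hN.ne', one_mul]
end

section
/- (Single-fault repair bound (A33)) Assume the stability bounds (NE1) and (NE2) with constants 0 < λ_min ≤ λ_max, and set κ = λ_max/λ_min. Let l ≥ 1 and let J be a fixed subset of {0,1,…,n} with |J| = l+1 and 0 ∉ J. Let I' be a uniform random subset of J of size l, and set I = ({0,1,…,n} \ J) ∪ I'. Then, with ξ = l/((l+1) λ_max), for every e ∈ V: E(‖e − ξ Σ_{i∈I} ω_i R_i T_i e‖²) ≤ (1 − l²/((l+1)² κ)) ‖e‖². -/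
open scoped RealInnerProductSpace

/-- **single-fault repair bound (A33).** Assume (NE1), (NE2) with
`0 < λ_min ≤ λ_max`, `κ = λ_max/λ_min`. Let `l ≥ 1`, let `J ⊆ {0,1,…,n}` be a fixed subset
with `|J| = l+1` and `0 ∉ J` (i.e., `J ⊆ {1,…,n}`), let `I'` be a uniform random subset of
`J` of size `l`, and set `I = ({0,…,n} \ J) ∪ I'`. Then, with `ξ = l/((l+1)λ_max)`:
`E(‖e − ξ ∑_{i∈I} ω_i R_i T_i e‖²) ≤ (1 − l²/((l+1)²κ)) ‖e‖²`. -/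
theorem single_fault_repair_bound
    {V : Type*} [NormedAddCommGroup V] [InnerProductSpace ℝ V] [CompleteSpace V]
    {n : ℕ} {W : Fin (n + 1) → Type*}
    [∀ i, NormedAddCommGroup (W i)] [∀ i, InnerProductSpace ℝ (W i)]
    [∀ i, CompleteSpace (W i)]
    (R : ∀ i, W i →L[ℝ] V) (ω : Fin (n + 1) → ℝ) (hω : ∀ i, 0 < ω i)
    (lmin lmax : ℝ) (hlmin : 0 < lmin) (hminmax : lmin ≤ lmax)
    (hNE1 : ∀ v : V,
      lmin * ‖v‖ ^ 2 ≤ ⟪(∑ i, ω i • R i ((ContinuousLinearMap.adjoint (R i)) v)), v⟫)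
    (hNE2 : ∀ w : ∀ i, W i,
      ‖∑ i, ω i • R i (w i)‖ ^ 2 ≤ lmax * ∑ i, ω i * ‖w i‖ ^ 2)
    (l : ℕ) (hl : 1 ≤ l)
    (J : Finset (Fin (n + 1))) (hJcard : J.card = l + 1) (hJ0 : (0 : Fin (n + 1)) ∉ J)
    (e : V) :
    (((l + 1).choose l : ℝ))⁻¹ *
        ∑ I' ∈ Finset.powersetCard l J,
          ‖e - ((l : ℝ) / ((l + 1) * lmax)) •
              ∑ i ∈ ((Finset.univ : Finset (Fin (n + 1))) \ J) ∪ I',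
                ω i • R i ((ContinuousLinearMap.adjoint (R i)) e)‖ ^ 2 ≤
      (1 - (l : ℝ) ^ 2 / (((l : ℝ) + 1) ^ 2 * (lmax / lmin))) * ‖e‖ ^ 2 := by
  classical
  have hlmax : 0 < lmax := lt_of_lt_of_le hlmin hminmax
  set L : ℝ := (l : ℝ) with hLdef
  have hL1 : (1 : ℝ) ≤ L := by rw [hLdef]; exact_mod_cast hl
  have hL0 : (0 : ℝ) < L + 1 := by linarith
  set T : ∀ i, W i := fun i => (ContinuousLinearMap.adjoint (R i)) e with hTdef
  set Q : Fin (n + 1) → V := fun i => ω i • R i (T i) with hQdef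
  set t : Fin (n + 1) → ℝ := fun i => ω i * ‖T i‖ ^ 2 with htdef
  have ht0 : ∀ i, 0 ≤ t i := fun i => mul_nonneg (hω i).le (sq_nonneg _)
  have hinner : ∀ I : Finset (Fin (n + 1)), ⟪∑ i ∈ I, Q i, e⟫ = ∑ i ∈ I, t i := by
    intro I
    rw [sum_inner]
    refine Finset.sum_congr rfl fun i _ => ?_
    rw [hQdef, htdef]
    simp only
    rw [real_inner_smul_left]
    congr 1
    rw [← ContinuousLinearMap.adjoint_inner_right (R i) (T i) e, hTdef,
      real_inner_self_eq_norm_sq]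
  set Tsum : ℝ := ∑ i, t i with hTsumdef
  have hNE1' : lmin * ‖e‖ ^ 2 ≤ Tsum := by
    have h := hNE1 e
    rw [show (∑ i, ω i • R i ((ContinuousLinearMap.adjoint (R i)) e)) = ∑ i, Q i from rfl,
      hinner Finset.univ] at h
    exact h
  have hTsum0 : 0 ≤ Tsum := Finset.sum_nonneg fun i _ => ht0 i
  have hnorm : ∀ I : Finset (Fin (n + 1)), ‖∑ i ∈ I, Q i‖ ^ 2 ≤ lmax * ∑ i ∈ I, t i := by
    intro I
    have key := hNE2 (fun i => if i ∈ I then T i else 0)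
    have h1 : (∑ i, ω i • R i (if i ∈ I then T i else 0)) = ∑ i ∈ I, Q i := by
      have hh : ∀ i : Fin (n + 1),
          ω i • R i (if i ∈ I then T i else 0) = if i ∈ I then Q i else 0 := by
        intro i; split <;> simp [hQdef]
      rw [Finset.sum_congr rfl fun i _ => hh i, Finset.sum_ite_mem, Finset.univ_inter]
    have h2 : (∑ i, ω i * ‖if i ∈ I then T i else (0 : W i)‖ ^ 2) = ∑ i ∈ I, t i := by
      have hh : ∀ i : Fin (n + 1),
          ω i * ‖if i ∈ I then T i else (0 : W i)‖ ^ 2 = if i ∈ I then t i else 0 := by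
        intro i; split <;> simp [htdef]
      rw [Finset.sum_congr rfl fun i _ => hh i, Finset.sum_ite_mem, Finset.univ_inter]
    rw [h1, h2] at key
    exact key
  have hsub_le : ∀ I : Finset (Fin (n + 1)), ∑ i ∈ I, t i ≤ Tsum :=
    fun I => Finset.sum_le_sum_of_subset_of_nonneg (Finset.subset_univ I)
      (fun i _ _ => ht0 i)
  set ξ : ℝ := L / ((L + 1) * lmax) with hxi
  have hξ0 : 0 ≤ ξ := by rw [hxi]; positivity
  set A : ℝ := ∑ i ∈ (Finset.univ : Finset (Fin (n + 1))) \ J, t i with hAdef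
  set SJ : ℝ := ∑ i ∈ J, t i with hSJdef
  have hAS : A = Tsum - SJ := by
    rw [hAdef, hSJdef, hTsumdef, eq_sub_iff_add_eq, ← Finset.sum_union Finset.sdiff_disjoint,
      Finset.sdiff_union_of_subset (Finset.subset_univ J)]
  have hSJle : SJ ≤ Tsum := hsub_le J
  -- per-term bound
  have hterm : ∀ I' ∈ Finset.powersetCard l J,
      ‖e - ξ • ∑ i ∈ ((Finset.univ : Finset (Fin (n + 1))) \ J) ∪ I', Q i‖ ^ 2 ≤
        (‖e‖ ^ 2 - 2 * ξ * A + ξ ^ 2 * (lmax * Tsum)) - 2 * ξ * ∑ i ∈ I', t i := by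
    intro I' hI'
    obtain ⟨hI'sub, hI'card⟩ := Finset.mem_powersetCard.mp hI'
    set I : Finset (Fin (n + 1)) := ((Finset.univ : Finset (Fin (n + 1))) \ J) ∪ I' with hIdef
    have hdisj : Disjoint ((Finset.univ : Finset (Fin (n + 1))) \ J) I' :=
      Finset.disjoint_of_subset_right hI'sub Finset.sdiff_disjoint
    have hIt : ∑ i ∈ I, t i = A + ∑ i ∈ I', t i := by
      rw [hIdef, Finset.sum_union hdisj]
    have hx : ‖e - ξ • ∑ i ∈ I, Q i‖ ^ 2 =
        ‖e‖ ^ 2 - 2 * ξ * (A + ∑ i ∈ I', t i) + ξ ^ 2 * ‖∑ i ∈ I, Q i‖ ^ 2 := by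
      rw [norm_sub_sq_real, real_inner_smul_right, ← real_inner_comm e, hinner I, hIt, norm_smul,
        mul_pow, Real.norm_eq_abs, sq_abs]
      ring
    rw [hx]
    have h5 : ‖∑ i ∈ I, Q i‖ ^ 2 ≤ lmax * Tsum :=
      le_trans (hnorm I) (mul_le_mul_of_nonneg_left (hsub_le I) hlmax.le)
    nlinarith [mul_le_mul_of_nonneg_left h5 (sq_nonneg ξ)]
  -- combinatorics: powersetCard l J = image of erase
  have hP : Finset.powersetCard l J = J.image (fun j => J.erase j) := by
    ext I'
    simp only [Finset.mem_powersetCard, Finset.mem_image]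
    constructor
    · rintro ⟨hsub, hcard⟩
      have h1 : (J \ I').card = 1 := by
        rw [Finset.card_sdiff_of_subset hsub, hJcard, hcard]; simp
      obtain ⟨j, hj⟩ := Finset.card_eq_one.mp h1
      have hjJ : j ∈ J ∧ j ∉ I' := by
        have hm : j ∈ J \ I' := by rw [hj]; exact Finset.mem_singleton_self j
        exact Finset.mem_sdiff.mp hm
      refine ⟨j, hjJ.1, ?_⟩
      ext i
      simp only [Finset.mem_erase]
      constructor
      · rintro ⟨hne, hiJ⟩
        by_contra hiI
        have hm : i ∈ J \ I' := Finset.mem_sdiff.mpr ⟨hiJ, hiI⟩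
        rw [hj, Finset.mem_singleton] at hm
        exact hne hm
      · intro hiI
        exact ⟨fun h => hjJ.2 (h ▸ hiI), hsub hiI⟩
    · rintro ⟨j, hjJ, rfl⟩
      exact ⟨Finset.erase_subset _ _, by simp [Finset.card_erase_of_mem hjJ, hJcard]⟩
  have hinj : ∀ x ∈ J, ∀ y ∈ J, J.erase x = J.erase y → x = y := by
    intro x hx y hy hxy
    by_contra hne
    have hm : x ∈ J.erase y := Finset.mem_erase.mpr ⟨hne, hx⟩
    rw [← hxy] at hm
    exact (Finset.mem_erase.mp hm).1 rfl
  have hsumC : ∑ I' ∈ Finset.powersetCard l J, ∑ i ∈ I', t i = L * SJ := by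
    rw [hP, Finset.sum_image hinj,
      Finset.sum_congr rfl (fun j hj => Finset.sum_erase_eq_sub (f := t) hj),
      Finset.sum_sub_distrib, ← hSJdef, Finset.sum_const, hJcard, nsmul_eq_mul, hLdef]
    push_cast
    ring
  have hcardP : ((Finset.powersetCard l J).card : ℝ) = L + 1 := by
    rw [Finset.card_powersetCard, hJcard, Nat.choose_succ_self_right, hLdef]
    push_cast
    ring
  -- sum the per-term bound
  have hsum : ∑ I' ∈ Finset.powersetCard l J,
      ‖e - ξ • ∑ i ∈ ((Finset.univ : Finset (Fin (n + 1))) \ J) ∪ I', Q i‖ ^ 2 ≤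
      (L + 1) * (‖e‖ ^ 2 - 2 * ξ * A + ξ ^ 2 * (lmax * Tsum)) - 2 * ξ * (L * SJ) := by
    calc ∑ I' ∈ Finset.powersetCard l J,
        ‖e - ξ • ∑ i ∈ ((Finset.univ : Finset (Fin (n + 1))) \ J) ∪ I', Q i‖ ^ 2
        ≤ ∑ I' ∈ Finset.powersetCard l J,
          ((‖e‖ ^ 2 - 2 * ξ * A + ξ ^ 2 * (lmax * Tsum)) - 2 * ξ * ∑ i ∈ I', t i) :=
          Finset.sum_le_sum hterm
      _ = (L + 1) * (‖e‖ ^ 2 - 2 * ξ * A + ξ ^ 2 * (lmax * Tsum)) - 2 * ξ * (L * SJ) := by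
          rw [Finset.sum_sub_distrib, Finset.sum_const, ← Finset.mul_sum, hsumC,
            nsmul_eq_mul, hcardP]
  -- key arithmetic bound
  set E2 : ℝ := ‖e‖ ^ 2 with hE2def
  have hE20 : 0 ≤ E2 := by rw [hE2def]; positivity
  have hc0 : (0 : ℝ) < (L + 1) * lmax := by positivity
  have hkey : (L + 1) * (E2 - 2 * ξ * A + ξ ^ 2 * (lmax * Tsum)) - 2 * ξ * (L * SJ) ≤
      (L + 1) * ((1 - L ^ 2 / ((L + 1) ^ 2 * (lmax / lmin))) * E2) := by
    have hid : (L + 1) * (E2 - 2 * ξ * A + ξ ^ 2 * (lmax * Tsum)) - 2 * ξ * (L * SJ) =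
        (L + 1) * E2 - ((L ^ 2 + 2 * L) / ((L + 1) * lmax)) * Tsum +
          (2 * L / ((L + 1) * lmax)) * SJ := by
      rw [hAS, hxi]
      field_simp
      ring
    have hid2 : (L + 1) * ((1 - L ^ 2 / ((L + 1) ^ 2 * (lmax / lmin))) * E2) =
        (L + 1) * E2 - (L ^ 2 / ((L + 1) * lmax)) * (lmin * E2) := by
      field_simp
    have h2 : (2 * L / ((L + 1) * lmax)) * SJ ≤ (2 * L / ((L + 1) * lmax)) * Tsum :=
      mul_le_mul_of_nonneg_left hSJle (by positivity)
    have h3 : (L ^ 2 / ((L + 1) * lmax)) * (lmin * E2) ≤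
        (L ^ 2 / ((L + 1) * lmax)) * Tsum :=
      mul_le_mul_of_nonneg_left hNE1' (by positivity)
    have h5 : ((L ^ 2 + 2 * L) / ((L + 1) * lmax)) * Tsum =
        (L ^ 2 / ((L + 1) * lmax)) * Tsum + (2 * L / ((L + 1) * lmax)) * Tsum := by
      ring
    rw [hid, hid2]
    linarith
  -- assemble
  have hgoal : ∑ I' ∈ Finset.powersetCard l J,
      ‖e - ξ • ∑ i ∈ ((Finset.univ : Finset (Fin (n + 1))) \ J) ∪ I', Q i‖ ^ 2 ≤
      (L + 1) * ((1 - L ^ 2 / ((L + 1) ^ 2 * (lmax / lmin))) * E2) :=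
    le_trans hsum hkey
  have hcast : (((l + 1).choose l : ℕ) : ℝ) = L + 1 := by
    rw [Nat.choose_succ_self_right, hLdef]; push_cast; ring
  rw [show (((l + 1).choose l : ℕ) : ℝ) = L + 1 from hcast]
  refine le_trans (mul_le_mul_of_nonneg_left hgoal
    (by positivity : (0 : ℝ) ≤ (L + 1)⁻¹)) (le_of_eq ?_)
  rw [inv_mul_cancel_left₀ (ne_of_gt hL0)]
end

section
/- (Newly-failing-node bound (A22)) Assume the stability bounds (NE1) and (NE2) with constants 0 < λ_min ≤ λ_max, set κ = λ_max/λ_min, and let n ≥ 2. Let I' be a uniform random subset of {1,…,n} of size n−1, and set I = {0} ∪ I'. Then, with ξ = (n−1)/(n λ_max), for every e ∈ V: E(‖e − ξ Σ_{i∈I} ω_i R_i T_i e‖²) ≤ (1 − (n−1)²/(n² κ)) ‖e‖². -/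
/-!
For `J ⊆ {0,…,n}` put `g = ∑_{i∈J} ω_i R_i T_i e` and `s_J = ∑_{i∈J} ω_i ‖T_i e‖²`. Then
`⟪g, e⟫ = s_J`, and (NE2) applied to `(T_i e)` cut off outside `J` gives `‖g‖² ≤ λ_max s_J`, so
for a step `ξ ≤ 1/λ_max` one has `‖e - ξ g‖² ≤ ‖e‖² - ξ s_J`. Averaging over `I'`, the index `0`
is always in `I` and every other index with probability `(n-1)/n`, hence
`E s_I ≥ (n-1)/n · s_{0,…,n} ≥ (n-1)/n · λ_min ‖e‖²` by (NE1).
-/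

open scoped RealInnerProductSpace

open Finset ContinuousLinearMap

namespace Finset

variable {ι M : Type*} [DecidableEq ι] [AddCommMonoid M]

lemma card_filter_mem_powersetCard {s : Finset ι} {i : ι} (hi : i ∈ s) {k : ℕ} (hk : k ≠ 0) :
    #{A ∈ s.powersetCard k | i ∈ A} = (#s - 1).choose (k - 1) := by
  simpa using card_filter_powersetCard_subset {i} s k (singleton_subset_iff.2 hi)
    (by simpa using Nat.one_le_iff_ne_zero.2 hk)

lemma sum_powersetCard_sum_s16 (s : Finset ι) {k : ℕ} (hk : k ≠ 0) (c : ι → M) :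
    ∑ A ∈ s.powersetCard k, ∑ j ∈ A, c j = (#s - 1).choose (k - 1) • ∑ j ∈ s, c j := by
  rw [sum_comm' (t' := s) (s' := fun j ↦ {A ∈ s.powersetCard k | j ∈ A}), smul_sum]
  · exact sum_congr rfl fun j hj ↦ by rw [sum_const, card_filter_mem_powersetCard hj hk]
  · intro A j
    simp only [mem_filter, mem_powersetCard]
    exact ⟨fun h ↦ ⟨⟨h.1, h.2⟩, h.1.1 h.2⟩, fun h ↦ ⟨h.1.1, h.1.2⟩⟩

lemma sum_powersetCard_sum_union_singleton {s : Finset ι} {a : ι} (ha : a ∉ s) {k : ℕ}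
    (hk : k ≠ 0) (c : ι → M) :
    ∑ A ∈ s.powersetCard k, ∑ j ∈ {a} ∪ A, c j =
      (#s).choose k • c a + (#s - 1).choose (k - 1) • ∑ j ∈ s, c j := by
  have hsplit : ∀ A ∈ s.powersetCard k, ∑ j ∈ {a} ∪ A, c j = c a + ∑ j ∈ A, c j := fun A hA ↦ by
    rw [sum_union (disjoint_singleton_left.2 fun h ↦ ha ((mem_powersetCard.1 hA).1 h)),
      sum_singleton]
  rw [sum_congr rfl hsplit, sum_add_distrib, sum_const, card_powersetCard,
    sum_powersetCard_sum_s16 s hk]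

end Finset

lemma norm_sum_subset_sq_le {V : Type*} [SeminormedAddCommGroup V] [NormedSpace ℝ V]
    {ι : Type*} [Fintype ι] [DecidableEq ι] {W : ι → Type*} [∀ i, SeminormedAddCommGroup (W i)]
    [∀ i, NormedSpace ℝ (W i)] (R : ∀ i, W i →L[ℝ] V) (ω : ι → ℝ) {L : ℝ}
    (hNE2 : ∀ w : ∀ i, W i, ‖∑ i, ω i • R i (w i)‖ ^ 2 ≤ L * ∑ i, ω i * ‖w i‖ ^ 2)
    (J : Finset ι) (w : ∀ i, W i) :
    ‖∑ i ∈ J, ω i • R i (w i)‖ ^ 2 ≤ L * ∑ i ∈ J, ω i * ‖w i‖ ^ 2 := by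
  simpa [apply_ite, ← sum_ite_mem, ite_smul] using hNE2 fun i ↦ if i ∈ J then w i else 0

lemma norm_sub_smul_sq_le_of_inner {V : Type*} [SeminormedAddCommGroup V]
    [InnerProductSpace ℝ V] {e g : V} {L ξ : ℝ} (hg : ‖g‖ ^ 2 ≤ L * ⟪g, e⟫)
    (hge : 0 ≤ ⟪g, e⟫) (hξ : 0 ≤ ξ) (hξL : ξ * L ≤ 1) :
    ‖e - ξ • g‖ ^ 2 ≤ ‖e‖ ^ 2 - ξ * ⟪g, e⟫ := by
  rw [norm_sub_sq_real, inner_smul_right, real_inner_comm, norm_smul, mul_pow, Real.norm_eq_abs,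
    sq_abs]
  nlinarith [mul_le_mul_of_nonneg_left hg (sq_nonneg ξ), mul_nonneg (mul_nonneg hξ hge)
    (sub_nonneg.2 hξL)]

section AdditiveSchwarz

variable {V : Type*} [NormedAddCommGroup V] [InnerProductSpace ℝ V] [CompleteSpace V]
  {ι : Type*} [Fintype ι] [DecidableEq ι] {W : ι → Type*} [∀ i, NormedAddCommGroup (W i)]
  [∀ i, InnerProductSpace ℝ (W i)] [∀ i, CompleteSpace (W i)] (R : ∀ i, W i →L[ℝ] V) (ω : ι → ℝ)

omit [Fintype ι] [DecidableEq ι] in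
lemma inner_sum_smul_apply_adjoint (J : Finset ι) (e : V) :
    ⟪∑ i ∈ J, ω i • R i (adjoint (R i) e), e⟫ = ∑ i ∈ J, ω i * ‖adjoint (R i) e‖ ^ 2 := by
  refine (sum_inner _ _ _).trans (sum_congr rfl fun i _ ↦ ?_)
  rw [real_inner_smul_left, ← adjoint_inner_right, real_inner_self_eq_norm_sq]

lemma norm_sub_smul_sum_apply_adjoint_sq_le (hω : ∀ i, 0 ≤ ω i) {L ξ : ℝ}
    (hNE2 : ∀ w : ∀ i, W i, ‖∑ i, ω i • R i (w i)‖ ^ 2 ≤ L * ∑ i, ω i * ‖w i‖ ^ 2)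
    (hξ : 0 ≤ ξ) (hξL : ξ * L ≤ 1) (J : Finset ι) (e : V) :
    ‖e - ξ • ∑ i ∈ J, ω i • R i (adjoint (R i) e)‖ ^ 2 ≤
      ‖e‖ ^ 2 - ξ * ∑ i ∈ J, ω i * ‖adjoint (R i) e‖ ^ 2 := by
  rw [← inner_sum_smul_apply_adjoint]
  refine norm_sub_smul_sq_le_of_inner ?_ ?_ hξ hξL <;> rw [inner_sum_smul_apply_adjoint]
  · exact norm_sum_subset_sq_le R ω hNE2 J _
  · exact sum_nonneg fun i _ ↦ mul_nonneg (hω i) (sq_nonneg _)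

end AdditiveSchwarz

lemma Nat.choose_self_sub_one {n : ℕ} (hn : 1 ≤ n) : n.choose (n - 1) = n := by
  rw [Nat.choose_symm hn, Nat.choose_one_right]

lemma sub_one_mul_sum_le_sum_powersetCard_sum_union {n : ℕ} (hn : 2 ≤ n) {c : Fin (n + 1) → ℝ}
    (hc : 0 ≤ c 0) :
    ((n : ℝ) - 1) * ∑ i, c i ≤
      ∑ I' ∈ ({0}ᶜ : Finset (Fin (n + 1))).powersetCard (n - 1), ∑ i ∈ {0} ∪ I', c i := by
  have hcard : #({0}ᶜ : Finset (Fin (n + 1))) = n := by simp [card_compl]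
  rw [sum_powersetCard_sum_union_singleton (notMem_compl.2 (mem_singleton_self 0)) (by omega),
    hcard, Nat.choose_self_sub_one (by omega), Nat.choose_self_sub_one (by omega),
    Fintype.sum_eq_add_sum_compl 0, nsmul_eq_mul, nsmul_eq_mul, Nat.cast_sub (by omega)]
  push_cast
  nlinarith

/-- **newly-failing-node bound (A22).** Assume (NE1), (NE2) with
`0 < λ_min ≤ λ_max`, `κ = λ_max/λ_min`, and `n ≥ 2`. Let `I'` be a uniform random subset of
`{1,…,n}` of size `n−1`, and set `I = {0} ∪ I'`. Then, with `ξ = (n−1)/(n λ_max)`: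
`E(‖e − ξ ∑_{i∈I} ω_i R_i T_i e‖²) ≤ (1 − (n−1)²/(n²κ)) ‖e‖²`. -/
theorem newly_failing_node_bound
    {V : Type*} [NormedAddCommGroup V] [InnerProductSpace ℝ V] [CompleteSpace V]
    {n : ℕ} {W : Fin (n + 1) → Type*}
    [∀ i, NormedAddCommGroup (W i)] [∀ i, InnerProductSpace ℝ (W i)]
    [∀ i, CompleteSpace (W i)]
    (R : ∀ i, W i →L[ℝ] V) (ω : Fin (n + 1) → ℝ) (hω : ∀ i, 0 < ω i)
    (lmin lmax : ℝ) (hlmin : 0 < lmin) (hminmax : lmin ≤ lmax)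
    (hNE1 : ∀ v : V,
      lmin * ‖v‖ ^ 2 ≤ ⟪(∑ i, ω i • R i ((ContinuousLinearMap.adjoint (R i)) v)), v⟫)
    (hNE2 : ∀ w : ∀ i, W i,
      ‖∑ i, ω i • R i (w i)‖ ^ 2 ≤ lmax * ∑ i, ω i * ‖w i‖ ^ 2)
    (hn : 2 ≤ n) (e : V) :
    ((n.choose (n - 1) : ℝ))⁻¹ *
        ∑ I' ∈ Finset.powersetCard (n - 1) (({0} : Finset (Fin (n + 1)))ᶜ),
          ‖e - (((n : ℝ) - 1) / (n * lmax)) •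
              ∑ i ∈ ({0} : Finset (Fin (n + 1))) ∪ I',
                ω i • R i ((ContinuousLinearMap.adjoint (R i)) e)‖ ^ 2 ≤
      (1 - ((n : ℝ) - 1) ^ 2 / ((n : ℝ) ^ 2 * (lmax / lmin))) * ‖e‖ ^ 2 := by
  have hlmax : 0 < lmax := hlmin.trans_le hminmax
  have hn' : (2 : ℝ) ≤ n := by exact_mod_cast hn
  set P := ({0}ᶜ : Finset (Fin (n + 1))).powersetCard (n - 1)
  have hP : #P = n := by simp [P, card_compl, Nat.choose_self_sub_one (by omega : 1 ≤ n)]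
  set c : Fin (n + 1) → ℝ := fun i ↦ ω i * ‖adjoint (R i) e‖ ^ 2
  set ξ := ((n : ℝ) - 1) / (n * lmax) with hξ
  have hξ0 : 0 ≤ ξ := div_nonneg (by linarith) (by positivity)
  have hξL : ξ * lmax ≤ 1 := by
    rw [div_mul_eq_mul_div, div_le_one (by positivity)]
    nlinarith
  have hstep J := norm_sub_smul_sum_apply_adjoint_sq_le R ω (fun i ↦ (hω i).le) hNE2
    hξ0 hξL J e
  have hNE1e : lmin * ‖e‖ ^ 2 ≤ ∑ i, c i := by
    simpa only [inner_sum_smul_apply_adjoint] using hNE1 e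
  have hmean := sub_one_mul_sum_le_sum_powersetCard_sum_union hn (c := c)
    (mul_nonneg (hω 0).le (sq_nonneg _))
  rw [Nat.choose_self_sub_one (by omega)]
  calc (n : ℝ)⁻¹ * ∑ I' ∈ P, ‖e - ξ • ∑ i ∈ {0} ∪ I', ω i • R i (adjoint (R i) e)‖ ^ 2
      ≤ (n : ℝ)⁻¹ * ∑ I' ∈ P, (‖e‖ ^ 2 - ξ * ∑ i ∈ {0} ∪ I', c i) := by
        gcongr with I' _
        exact hstep _
    _ = ‖e‖ ^ 2 - ξ * (n : ℝ)⁻¹ * ∑ I' ∈ P, ∑ i ∈ {0} ∪ I', c i := by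
        rw [sum_sub_distrib, sum_const, hP, nsmul_eq_mul, ← mul_sum]
        field_simp
    _ ≤ ‖e‖ ^ 2 - ξ * (n : ℝ)⁻¹ * (((n : ℝ) - 1) * (lmin * ‖e‖ ^ 2)) := by
        gcongr
        exact (mul_le_mul_of_nonneg_left hNE1e (by linarith)).trans hmean
    _ = _ := by
        rw [hξ]
        field_simp
end
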